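/- arXiv:2202.12744 — 9 statements merged into one kernel-verified Lean document; each statement's English description precedes it below -/
import Mathlib

section
/- Let (x̂_0,…,x̂_N, ŵ_0,…,ŵ_{N−1}) be a feasible estimated trajectory whose MHE cost V is at most the cost of the true trajectory used as a candidate, i.e. V ≤ 2η^N‖x_0 − x̂_prior‖_{P2}² + 2·Σ_{j=1}^{N} η^{j−1}‖w_{N−j}‖_Q². Then the δ-IOSS Lyapunov function satisfies the N-step decrease W(x̂_N, x_N) ≤ 4η^N·λ·W(x̂_prior, x_0) + 4·Σ_{j=1}^{N} η^{j−1}‖w_{N−j}‖_Q². (Theorem 1: the δ-IOSS Lyapunov function is an M-step Lyapunov function for MHE.) -/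
open Matrix Finset

/-- Quadratic form `‖v‖_S² = vᵀ S v` associated with a square matrix `S`. -/
noncomputable def quadNorm {ι : Type*} [Fintype ι] (S : Matrix ι ι ℝ) (v : ι → ℝ) : ℝ :=
  v ⬝ᵥ S.mulVec v


lemma quadNorm_nonneg {ι : Type*} [Fintype ι] {S : Matrix ι ι ℝ} (hS : S.PosSemidef)
    (v : ι → ℝ) : 0 ≤ quadNorm S v := by
  have := hS.dotProduct_mulVec_nonneg v
  simpa [quadNorm] using this

lemma quadNorm_neg {ι : Type*} [Fintype ι] (S : Matrix ι ι ℝ) (v : ι → ℝ) :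
    quadNorm S (-v) = quadNorm S v := by
  simp [quadNorm, Matrix.mulVec_neg]

lemma quadNorm_add_le {ι : Type*} [Fintype ι] {S : Matrix ι ι ℝ} (hS : S.PosSemidef)
    (a b : ι → ℝ) : quadNorm S (a + b) ≤ 2 * quadNorm S a + 2 * quadNorm S b := by
  have h1 := quadNorm_nonneg hS (a - b)
  have h2 : quadNorm S (a + b) + quadNorm S (a - b)
      = 2 * quadNorm S a + 2 * quadNorm S b := by
    simp only [quadNorm, Matrix.mulVec_add, Matrix.mulVec_sub, dotProduct_add,
      dotProduct_sub, add_dotProduct, sub_dotProduct]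
    ring
  linarith

lemma quadNorm_sub_le {ι : Type*} [Fintype ι] {S : Matrix ι ι ℝ} (hS : S.PosSemidef)
    (a b : ι → ℝ) : quadNorm S (a - b) ≤ 2 * quadNorm S a + 2 * quadNorm S b := by
  have := quadNorm_add_le hS a (-b)
  rw [quadNorm_neg] at this
  simpa [sub_eq_add_neg] using this

lemma reindex_aux (η : ℝ) (D : ℕ → ℝ) (N : ℕ) :
    ∑ j ∈ Finset.range N, η ^ (N - 1 - j) * D j
      = ∑ i ∈ Finset.Icc 1 N, η ^ (i - 1) * D (N - i) := by
  refine Finset.sum_nbij' (fun j => N - j) (fun i => N - i) ?_ ?_ ?_ ?_ ?_ <;>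
    intro a ha <;> simp only [Finset.mem_range, Finset.mem_Icc] at ha ⊢
  · omega
  · omega
  · omega
  · omega
  · have e1 : N - 1 - a = (N - a) - 1 := by omega
    rw [e1, show N - (N - a) = a from by omega]

/-- Theorem 1: the δ-IOSS Lyapunov function is an M-step Lyapunov function
for MHE: N-step decrease for an optimal (candidate-dominating) estimated trajectory. -/
theorem dIOSS_is_M_step_Lyapunov_function_for_MHE
    {n m q p : ℕ}
    (f : (Fin n → ℝ) → (Fin m → ℝ) → (Fin q → ℝ) → (Fin n → ℝ))
    (h : (Fin n → ℝ) → (Fin m → ℝ) → (Fin q → ℝ) → (Fin p → ℝ))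
    (X : Set (Fin n → ℝ)) (U : Set (Fin m → ℝ)) (Wset : Set (Fin q → ℝ)) (Y : Set (Fin p → ℝ))
    (W : (Fin n → ℝ) → (Fin n → ℝ) → ℝ)
    (P1 P2 : Matrix (Fin n) (Fin n) ℝ)
    (Q : Matrix (Fin q) (Fin q) ℝ) (R : Matrix (Fin p) (Fin p) ℝ)
    (η : ℝ) (hη0 : 0 ≤ η) (hη1 : η < 1)
    (hP1 : P1.PosDef) (hP2 : P2.PosDef) (hQ : Q.PosSemidef) (hR : R.PosSemidef)
    (hWlow : ∀ x xt, x ∈ X → xt ∈ X → quadNorm P1 (x - xt) ≤ W x xt)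
    (hWup : ∀ x xt, x ∈ X → xt ∈ X → W x xt ≤ quadNorm P2 (x - xt))
    (hdiss : ∀ x xt u w wt, x ∈ X → xt ∈ X → u ∈ U → w ∈ Wset → wt ∈ Wset →
      h x u w ∈ Y → h xt u wt ∈ Y →
      W (f x u w) (f xt u wt) ≤ η * W x xt + quadNorm Q (w - wt)
        + quadNorm R (h x u w - h xt u wt))
    -- window length and true trajectory
    (N : ℕ) (hN : 1 ≤ N)
    (u : ℕ → Fin m → ℝ) (x : ℕ → Fin n → ℝ) (w : ℕ → Fin q → ℝ)
    (hu : ∀ j < N, u j ∈ U)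
    (hx : ∀ j < N, x j ∈ X) (hw : ∀ j < N, w j ∈ Wset)
    (hdyn : ∀ j < N, x (j + 1) = f (x j) (u j) (w j))
    (hy : ∀ j < N, h (x j) (u j) (w j) ∈ Y)
    (hxN : x N ∈ X)
    -- prior estimate
    (xp : Fin n → ℝ) (hxp : xp ∈ X)
    -- feasible estimated trajectory
    (xh : ℕ → Fin n → ℝ) (wh : ℕ → Fin q → ℝ)
    (hxh : ∀ j < N, xh j ∈ X) (hwh : ∀ j < N, wh j ∈ Wset)
    (hdynh : ∀ j < N, xh (j + 1) = f (xh j) (u j) (wh j))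
    (hyh : ∀ j < N, h (xh j) (u j) (wh j) ∈ Y)
    (hxhN : xh N ∈ X)
    -- its MHE cost
    (V : ℝ)
    (hV : V = 2 * η ^ N * quadNorm P2 (xh 0 - xp)
      + ∑ j ∈ Finset.Icc 1 N, η ^ (j - 1) *
          (2 * quadNorm Q (wh (N - j))
            + quadNorm R (h (xh (N - j)) (u (N - j)) (wh (N - j))
                - h (x (N - j)) (u (N - j)) (w (N - j)))))
    -- the cost of the estimated trajectory is at most the candidate cost of the true trajectory
    (hVle : V ≤ 2 * η ^ N * quadNorm P2 (x 0 - xp)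
      + 2 * ∑ j ∈ Finset.Icc 1 N, η ^ (j - 1) * quadNorm Q (w (N - j)))
    -- generalized-eigenvalue bound
    (lam : ℝ) (hlam0 : 0 ≤ lam)
    (hlam : ∀ v : Fin n → ℝ, quadNorm P2 v ≤ lam * quadNorm P1 v) :
    W (xh N) (x N) ≤ 4 * η ^ N * lam * W xp (x 0)
      + 4 * ∑ j ∈ Finset.Icc 1 N, η ^ (j - 1) * quadNorm Q (w (N - j)) := by
  set D : ℕ → ℝ := fun j => quadNorm Q (wh j - w j) +
    quadNorm R (h (xh j) (u j) (wh j) - h (x j) (u j) (w j)) with hD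
  -- N-step dissipation
  have key : ∀ k, k ≤ N → W (xh k) (x k) ≤ η ^ k * W (xh 0) (x 0)
      + ∑ j ∈ Finset.range k, η ^ (k - 1 - j) * D j := by
    intro k
    induction k with
    | zero => intro _; simp
    | succ k ih =>
      intro hk
      have hkN : k < N := hk
      have hk' := ih (le_of_lt hkN)
      have hstep : W (xh (k+1)) (x (k+1)) ≤ η * W (xh k) (x k) + D k := by
        rw [hdyn k hkN, hdynh k hkN]
        have := hdiss (xh k) (x k) (u k) (wh k) (w k) (hxh k hkN) (hx k hkN)
          (hu k hkN) (hwh k hkN) (hw k hkN) (hyh k hkN) (hy k hkN)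
        simp only [hD]
        linarith
      have hsum : ∑ j ∈ Finset.range (k+1), η ^ (k + 1 - 1 - j) * D j
          = η * ∑ j ∈ Finset.range k, η ^ (k - 1 - j) * D j + D k := by
        rw [Finset.sum_range_succ, Finset.mul_sum]
        congr 1
        · apply Finset.sum_congr rfl
          intro j hj
          have hj' : j < k := Finset.mem_range.mp hj
          rw [show k + 1 - 1 - j = (k - 1 - j) + 1 from by omega, pow_succ]
          ring
        · simp
      calc W (xh (k+1)) (x (k+1)) ≤ η * W (xh k) (x k) + D k := hstep
        _ ≤ η * (η ^ k * W (xh 0) (x 0)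
              + ∑ j ∈ Finset.range k, η ^ (k - 1 - j) * D j) + D k := by
            have := mul_le_mul_of_nonneg_left hk' hη0
            linarith
        _ = η ^ (k+1) * W (xh 0) (x 0)
              + ∑ j ∈ Finset.range (k+1), η ^ (k + 1 - 1 - j) * D j := by
            rw [hsum]; ring
  have hkeyN := key N le_rfl
  rw [reindex_aux] at hkeyN
  have hx0 : x 0 ∈ X := hx 0 hN
  have hxh0 : xh 0 ∈ X := hxh 0 hN
  have hηN : (0:ℝ) ≤ η ^ N := pow_nonneg hη0 N
  -- bound initial term
  have hW0 : W (xh 0) (x 0) ≤ 2 * quadNorm P2 (xh 0 - xp) + 2 * quadNorm P2 (x 0 - xp) := by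
    have h1 := hWup (xh 0) (x 0) hxh0 hx0
    have h2 : quadNorm P2 (xh 0 - x 0)
        ≤ 2 * quadNorm P2 (xh 0 - xp) + 2 * quadNorm P2 (x 0 - xp) := by
      have := quadNorm_add_le hP2.posSemidef (xh 0 - xp) (-(x 0 - xp))
      rw [quadNorm_neg] at this
      have e : xh 0 - x 0 = (xh 0 - xp) + -(x 0 - xp) := by abel
      rw [e]
      exact this
    linarith
  -- bound disturbance terms
  have hDsum : ∑ i ∈ Finset.Icc 1 N, η ^ (i - 1) * D (N - i)
      ≤ (∑ i ∈ Finset.Icc 1 N, η ^ (i - 1) *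
          (2 * quadNorm Q (wh (N - i))
            + quadNorm R (h (xh (N - i)) (u (N - i)) (wh (N - i))
                - h (x (N - i)) (u (N - i)) (w (N - i)))))
        + 2 * ∑ i ∈ Finset.Icc 1 N, η ^ (i - 1) * quadNorm Q (w (N - i)) := by
    rw [Finset.mul_sum, ← Finset.sum_add_distrib]
    apply Finset.sum_le_sum
    intro i hi
    have hηi : (0:ℝ) ≤ η ^ (i - 1) := pow_nonneg hη0 _
    have hQb : quadNorm Q (wh (N - i) - w (N - i))
        ≤ 2 * quadNorm Q (wh (N - i)) + 2 * quadNorm Q (w (N - i)) :=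
      quadNorm_sub_le hQ _ _
    have hmain : D (N - i) ≤ (2 * quadNorm Q (wh (N - i))
            + quadNorm R (h (xh (N - i)) (u (N - i)) (wh (N - i))
                - h (x (N - i)) (u (N - i)) (w (N - i))))
          + 2 * quadNorm Q (w (N - i)) := by
      simp only [hD]
      linarith
    calc η ^ (i - 1) * D (N - i)
        ≤ η ^ (i - 1) * ((2 * quadNorm Q (wh (N - i))
            + quadNorm R (h (xh (N - i)) (u (N - i)) (wh (N - i))
                - h (x (N - i)) (u (N - i)) (w (N - i))))
          + 2 * quadNorm Q (w (N - i))) := mul_le_mul_of_nonneg_left hmain hηi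
      _ = η ^ (i - 1) * (2 * quadNorm Q (wh (N - i))
            + quadNorm R (h (xh (N - i)) (u (N - i)) (wh (N - i))
                - h (x (N - i)) (u (N - i)) (w (N - i))))
          + 2 * (η ^ (i - 1) * quadNorm Q (w (N - i))) := by ring
  -- assemble
  set Sw := ∑ i ∈ Finset.Icc 1 N, η ^ (i - 1) * quadNorm Q (w (N - i)) with hSw
  have step1 : W (xh N) (x N) ≤ V + 2 * η ^ N * quadNorm P2 (x 0 - xp) + 2 * Sw := by
    have hmul := mul_le_mul_of_nonneg_left hW0 hηN
    rw [hV]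
    calc W (xh N) (x N)
        ≤ η ^ N * W (xh 0) (x 0) + ∑ i ∈ Finset.Icc 1 N, η ^ (i - 1) * D (N - i) := hkeyN
      _ ≤ η ^ N * (2 * quadNorm P2 (xh 0 - xp) + 2 * quadNorm P2 (x 0 - xp))
          + ((∑ i ∈ Finset.Icc 1 N, η ^ (i - 1) *
              (2 * quadNorm Q (wh (N - i))
                + quadNorm R (h (xh (N - i)) (u (N - i)) (wh (N - i))
                    - h (x (N - i)) (u (N - i)) (w (N - i))))) + 2 * Sw) := by
          exact add_le_add hmul hDsum
      _ = (2 * η ^ N * quadNorm P2 (xh 0 - xp)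
            + ∑ i ∈ Finset.Icc 1 N, η ^ (i - 1) *
              (2 * quadNorm Q (wh (N - i))
                + quadNorm R (h (xh (N - i)) (u (N - i)) (wh (N - i))
                    - h (x (N - i)) (u (N - i)) (w (N - i)))))
          + 2 * η ^ N * quadNorm P2 (x 0 - xp) + 2 * Sw := by ring
  have step2 : W (xh N) (x N) ≤ 4 * η ^ N * quadNorm P2 (x 0 - xp) + 4 * Sw := by
    rw [hSw] at *
    linarith
  -- final bound via λ and lower bound of W
  have hfin : quadNorm P2 (x 0 - xp) ≤ lam * W xp (x 0) := by
    have h1 := hlam (x 0 - xp)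
    have h2 : quadNorm P1 (x 0 - xp) = quadNorm P1 (xp - x 0) := by
      rw [show xp - x 0 = -(x 0 - xp) from by abel, quadNorm_neg]
    have h3 := hWlow xp (x 0) hxp hx0
    nlinarith [hlam0]
  have h4 : 4 * η ^ N * quadNorm P2 (x 0 - xp) ≤ 4 * η ^ N * lam * W xp (x 0) := by
    have := mul_le_mul_of_nonneg_left hfin (by linarith : (0:ℝ) ≤ 4 * η ^ N)
    linarith [this]
  linarith
end

section
/- For every feasible estimated trajectory (x̂_0,…,x̂_N, ŵ_0,…,ŵ_{N−1}) with MHE cost V it holds that W(x̂_N, x_N) ≤ 2η^N·λ·W(x̂_prior, x_0) + V + 2·Σ_{j=1}^{N} η^{j−1}‖w_{N−j}‖_Q². (Proposition 1: the current δ-IOSS Lyapunov function is bounded by a past δ-IOSS Lyapunov function, the MHE value function, and the disturbances in the horizon window.) -/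
open Matrix Finset
lemma sum_reindex_window (N : ℕ) (η : ℝ) (c : ℕ → ℝ) :
    ∑ i ∈ range N, η ^ (N - 1 - i) * c i = ∑ j ∈ Icc 1 N, η ^ (j - 1) * c (N - j) := by
  refine Finset.sum_nbij' (fun i => N - i) (fun j => N - j) ?_ ?_ ?_ ?_ ?_
  · intro a ha
    simp only [mem_range] at ha
    simp only [mem_Icc]
    omega
  · intro a ha
    simp only [mem_Icc] at ha
    simp only [mem_range]
    omega
  · intro a ha
    simp only [mem_range] at ha
    show N - (N - a) = a
    omega
  · intro a ha
    simp only [mem_Icc] at ha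
    show N - (N - a) = a
    omega
  · intro a ha
    simp only [mem_range] at ha
    have h1 : N - a - 1 = N - 1 - a := by omega
    have h2 : N - (N - a) = a := by omega
    rw [h1, h2]
/-- Proposition 1: bound on the current δ-IOSS Lyapunov function by the
past Lyapunov function, the MHE value function, and the disturbances in the window. -/
theorem dIOSS_Lyapunov_value_function_bound
    {n m q p : ℕ}
    (f : (Fin n → ℝ) → (Fin m → ℝ) → (Fin q → ℝ) → (Fin n → ℝ))
    (h : (Fin n → ℝ) → (Fin m → ℝ) → (Fin q → ℝ) → (Fin p → ℝ))
    (X : Set (Fin n → ℝ)) (U : Set (Fin m → ℝ)) (Wset : Set (Fin q → ℝ)) (Y : Set (Fin p → ℝ))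
    (W : (Fin n → ℝ) → (Fin n → ℝ) → ℝ)
    (P1 P2 : Matrix (Fin n) (Fin n) ℝ)
    (Q : Matrix (Fin q) (Fin q) ℝ) (R : Matrix (Fin p) (Fin p) ℝ)
    (η : ℝ) (hη0 : 0 ≤ η) (hη1 : η < 1)
    (hP1 : P1.PosDef) (hP2 : P2.PosDef) (hQ : Q.PosSemidef) (hR : R.PosSemidef)
    (hWlow : ∀ x xt, x ∈ X → xt ∈ X → quadNorm P1 (x - xt) ≤ W x xt)
    (hWup : ∀ x xt, x ∈ X → xt ∈ X → W x xt ≤ quadNorm P2 (x - xt))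
    (hdiss : ∀ x xt u w wt, x ∈ X → xt ∈ X → u ∈ U → w ∈ Wset → wt ∈ Wset →
      h x u w ∈ Y → h xt u wt ∈ Y →
      W (f x u w) (f xt u wt) ≤ η * W x xt + quadNorm Q (w - wt)
        + quadNorm R (h x u w - h xt u wt))
    -- window length and true trajectory
    (N : ℕ) (hN : 1 ≤ N)
    (u : ℕ → Fin m → ℝ) (x : ℕ → Fin n → ℝ) (w : ℕ → Fin q → ℝ)
    (hu : ∀ j < N, u j ∈ U)
    (hx : ∀ j < N, x j ∈ X) (hw : ∀ j < N, w j ∈ Wset)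
    (hdyn : ∀ j < N, x (j + 1) = f (x j) (u j) (w j))
    (hy : ∀ j < N, h (x j) (u j) (w j) ∈ Y)
    (hxN : x N ∈ X)
    -- prior estimate
    (xp : Fin n → ℝ) (hxp : xp ∈ X)
    -- feasible estimated trajectory
    (xh : ℕ → Fin n → ℝ) (wh : ℕ → Fin q → ℝ)
    (hxh : ∀ j < N, xh j ∈ X) (hwh : ∀ j < N, wh j ∈ Wset)
    (hdynh : ∀ j < N, xh (j + 1) = f (xh j) (u j) (wh j))
    (hyh : ∀ j < N, h (xh j) (u j) (wh j) ∈ Y)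
    (hxhN : xh N ∈ X)
    -- its MHE cost
    (V : ℝ)
    (hV : V = 2 * η ^ N * quadNorm P2 (xh 0 - xp)
      + ∑ j ∈ Finset.Icc 1 N, η ^ (j - 1) *
          (2 * quadNorm Q (wh (N - j))
            + quadNorm R (h (xh (N - j)) (u (N - j)) (wh (N - j))
                - h (x (N - j)) (u (N - j)) (w (N - j)))))
    -- generalized-eigenvalue bound
    (lam : ℝ) (hlam0 : 0 ≤ lam)
    (hlam : ∀ v : Fin n → ℝ, quadNorm P2 v ≤ lam * quadNorm P1 v) :
    W (xh N) (x N) ≤ 2 * η ^ N * lam * W xp (x 0) + V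
      + 2 * ∑ j ∈ Finset.Icc 1 N, η ^ (j - 1) * quadNorm Q (w (N - j)) := by
  set g : ℕ → ℝ := fun i => quadNorm Q (wh i - w i)
    + quadNorm R (h (xh i) (u i) (wh i) - h (x i) (u i) (w i)) with hg
  have claim : ∀ k, k ≤ N → W (xh k) (x k) ≤ η ^ k * W (xh 0) (x 0)
      + ∑ i ∈ range k, η ^ (k - 1 - i) * g i := by
    intro k
    induction k with
    | zero => intro _; simp
    | succ k ih =>
      intro hk1
      have hkN : k < N := hk1
      have ihk := ih (le_of_lt hkN)
      have step := hdiss (xh k) (x k) (u k) (wh k) (w k) (hxh k hkN) (hx k hkN)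
        (hu k hkN) (hwh k hkN) (hw k hkN) (hyh k hkN) (hy k hkN)
      rw [← hdynh k hkN, ← hdyn k hkN] at step
      have hsum : ∑ i ∈ range (k + 1), η ^ (k + 1 - 1 - i) * g i
          = η * ∑ i ∈ range k, η ^ (k - 1 - i) * g i + g k := by
        rw [Finset.sum_range_succ, Finset.mul_sum]
        congr 1
        · refine Finset.sum_congr rfl fun i hi => ?_
          simp only [mem_range] at hi
          have : k + 1 - 1 - i = (k - 1 - i) + 1 := by omega
          rw [this, pow_succ]
          ring
        · have : k + 1 - 1 - k = 0 := by omega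
          rw [this]
          ring
      have hη : 0 ≤ η := hη0
      calc W (xh (k + 1)) (x (k + 1))
          ≤ η * W (xh k) (x k) + g k := by
            simp only [hg]; linarith [step]
        _ ≤ η * (η ^ k * W (xh 0) (x 0) + ∑ i ∈ range k, η ^ (k - 1 - i) * g i) + g k := by
            nlinarith [ihk]
        _ = η ^ (k + 1) * W (xh 0) (x 0) + ∑ i ∈ range (k + 1), η ^ (k + 1 - 1 - i) * g i := by
            rw [hsum, pow_succ]; ring
  have hmain := claim N le_rfl
  have hN0 : 0 < N := hN
  have hW0 : W (xh 0) (x 0) ≤ quadNorm P2 (xh 0 - x 0) := hWup _ _ (hxh 0 hN0) (hx 0 hN0)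
  have hsplit : quadNorm P2 (xh 0 - x 0)
      ≤ 2 * quadNorm P2 (xh 0 - xp) + 2 * quadNorm P2 (xp - x 0) := by
    have : xh 0 - x 0 = (xh 0 - xp) + (xp - x 0) := by abel
    rw [this]
    exact quadNorm_add_le hP2.posSemidef _ _
  have hp2p1 : quadNorm P2 (xp - x 0) ≤ lam * W xp (x 0) :=
    (hlam _).trans (mul_le_mul_of_nonneg_left (hWlow xp (x 0) hxp (hx 0 hN0)) hlam0)
  have hηN : (0:ℝ) ≤ η ^ N := pow_nonneg hη0 N
  -- bound the sums
  have hgb : ∀ i ∈ range N, η ^ (N - 1 - i) * g i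
      ≤ η ^ (N - 1 - i) * ((2 * quadNorm Q (wh i)
          + quadNorm R (h (xh i) (u i) (wh i) - h (x i) (u i) (w i)))
          + 2 * quadNorm Q (w i)) := by
    intro i _
    apply mul_le_mul_of_nonneg_left _ (pow_nonneg hη0 _)
    have := quadNorm_sub_le hQ (wh i) (w i)
    simp only [hg]
    linarith
  have hsum1 : ∑ i ∈ range N, η ^ (N - 1 - i) * g i
      ≤ ∑ i ∈ range N, η ^ (N - 1 - i) * ((2 * quadNorm Q (wh i)
          + quadNorm R (h (xh i) (u i) (wh i) - h (x i) (u i) (w i)))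
          + 2 * quadNorm Q (w i)) := Finset.sum_le_sum hgb
  have hsum2 : ∑ i ∈ range N, η ^ (N - 1 - i) * ((2 * quadNorm Q (wh i)
          + quadNorm R (h (xh i) (u i) (wh i) - h (x i) (u i) (w i)))
          + 2 * quadNorm Q (w i))
      = (∑ i ∈ range N, η ^ (N - 1 - i) * (2 * quadNorm Q (wh i)
          + quadNorm R (h (xh i) (u i) (wh i) - h (x i) (u i) (w i))))
        + ∑ i ∈ range N, η ^ (N - 1 - i) * (2 * quadNorm Q (w i)) := by
    rw [← Finset.sum_add_distrib]
    exact Finset.sum_congr rfl fun i _ => by ring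
  have hre1 : ∑ i ∈ range N, η ^ (N - 1 - i) * (2 * quadNorm Q (wh i)
          + quadNorm R (h (xh i) (u i) (wh i) - h (x i) (u i) (w i)))
      = ∑ j ∈ Icc 1 N, η ^ (j - 1) * (2 * quadNorm Q (wh (N - j))
          + quadNorm R (h (xh (N - j)) (u (N - j)) (wh (N - j))
              - h (x (N - j)) (u (N - j)) (w (N - j)))) :=
    sum_reindex_window N η _
  have hre2 : ∑ i ∈ range N, η ^ (N - 1 - i) * (2 * quadNorm Q (w i))
      = ∑ j ∈ Icc 1 N, η ^ (j - 1) * (2 * quadNorm Q (w (N - j))) :=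
    sum_reindex_window N η _
  have hre2' : ∑ j ∈ Icc 1 N, η ^ (j - 1) * (2 * quadNorm Q (w (N - j)))
      = 2 * ∑ j ∈ Icc 1 N, η ^ (j - 1) * quadNorm Q (w (N - j)) := by
    rw [Finset.mul_sum]
    exact Finset.sum_congr rfl fun j _ => by ring
  have hW0' : η ^ N * W (xh 0) (x 0)
      ≤ 2 * η ^ N * quadNorm P2 (xh 0 - xp) + 2 * η ^ N * lam * W xp (x 0) := by
    nlinarith [mul_le_mul_of_nonneg_left (hW0.trans hsplit) hηN]
  rw [hV]
  have htot := hsum1.trans_eq hsum2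
  rw [hre1, hre2, hre2'] at htot
  linarith
end

section
/- Let (x̂_0,…,x̂_N, ŵ_0,…,ŵ_{N−1}) be a feasible estimated trajectory whose MHE cost V is at most the cost of the true trajectory used as a candidate, i.e. V ≤ 2η^N‖x_0 − x̂_prior‖_{P2}² + 2·Σ_{j=1}^{N} η^{j−1}‖w_{N−j}‖_Q². Then W(x̂_N, x_N) ≤ 4η^N‖x̂_prior − x_0‖_{P2}² + 4·Σ_{j=1}^{N} η^{j−1}‖w_{N−j}‖_Q². (Intermediate bound (18) in the proof of Theorem 1, with the prior-weighting distance in place of the past Lyapunov function.) -/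
open Matrix Finset

lemma quadNorm_sub_comm {ι : Type*} [Fintype ι] (S : Matrix ι ι ℝ) (a b : ι → ℝ) :
    quadNorm S (a - b) = quadNorm S (b - a) := by
  rw [← quadNorm_neg S (a - b), neg_sub]

lemma quadNorm_parallelogram {ι : Type*} [Fintype ι] (S : Matrix ι ι ℝ) (a b : ι → ℝ) :
    quadNorm S (a + b) + quadNorm S (a - b) = 2 * quadNorm S a + 2 * quadNorm S b := by
  simp only [quadNorm, mulVec_add, mulVec_sub, dotProduct_add, dotProduct_sub,
    add_dotProduct, sub_dotProduct]
  ring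

/-- intermediate bound (18) in the proof of Theorem 1, with the
prior-weighting distance in place of the past Lyapunov function. -/
theorem MHE_intermediate_prior_weighting_bound
    {n m q p : ℕ}
    (f : (Fin n → ℝ) → (Fin m → ℝ) → (Fin q → ℝ) → (Fin n → ℝ))
    (h : (Fin n → ℝ) → (Fin m → ℝ) → (Fin q → ℝ) → (Fin p → ℝ))
    (X : Set (Fin n → ℝ)) (U : Set (Fin m → ℝ)) (Wset : Set (Fin q → ℝ)) (Y : Set (Fin p → ℝ))
    (W : (Fin n → ℝ) → (Fin n → ℝ) → ℝ)
    (P1 P2 : Matrix (Fin n) (Fin n) ℝ)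
    (Q : Matrix (Fin q) (Fin q) ℝ) (R : Matrix (Fin p) (Fin p) ℝ)
    (η : ℝ) (hη0 : 0 ≤ η) (hη1 : η < 1)
    (hP1 : P1.PosDef) (hP2 : P2.PosDef) (hQ : Q.PosSemidef) (hR : R.PosSemidef)
    (hWlow : ∀ x xt, x ∈ X → xt ∈ X → quadNorm P1 (x - xt) ≤ W x xt)
    (hWup : ∀ x xt, x ∈ X → xt ∈ X → W x xt ≤ quadNorm P2 (x - xt))
    (hdiss : ∀ x xt u w wt, x ∈ X → xt ∈ X → u ∈ U → w ∈ Wset → wt ∈ Wset →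
      h x u w ∈ Y → h xt u wt ∈ Y →
      W (f x u w) (f xt u wt) ≤ η * W x xt + quadNorm Q (w - wt)
        + quadNorm R (h x u w - h xt u wt))
    -- window length and true trajectory
    (N : ℕ) (hN : 1 ≤ N)
    (u : ℕ → Fin m → ℝ) (x : ℕ → Fin n → ℝ) (w : ℕ → Fin q → ℝ)
    (hu : ∀ j < N, u j ∈ U)
    (hx : ∀ j < N, x j ∈ X) (hw : ∀ j < N, w j ∈ Wset)
    (hdyn : ∀ j < N, x (j + 1) = f (x j) (u j) (w j))
    (hy : ∀ j < N, h (x j) (u j) (w j) ∈ Y)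
    (hxN : x N ∈ X)
    -- prior estimate
    (xp : Fin n → ℝ) (hxp : xp ∈ X)
    -- feasible estimated trajectory
    (xh : ℕ → Fin n → ℝ) (wh : ℕ → Fin q → ℝ)
    (hxh : ∀ j < N, xh j ∈ X) (hwh : ∀ j < N, wh j ∈ Wset)
    (hdynh : ∀ j < N, xh (j + 1) = f (xh j) (u j) (wh j))
    (hyh : ∀ j < N, h (xh j) (u j) (wh j) ∈ Y)
    (hxhN : xh N ∈ X)
    -- its MHE cost
    (V : ℝ)
    (hV : V = 2 * η ^ N * quadNorm P2 (xh 0 - xp)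
      + ∑ j ∈ Finset.Icc 1 N, η ^ (j - 1) *
          (2 * quadNorm Q (wh (N - j))
            + quadNorm R (h (xh (N - j)) (u (N - j)) (wh (N - j))
                - h (x (N - j)) (u (N - j)) (w (N - j)))))
    -- the cost of the estimated trajectory is at most the candidate cost of the true trajectory
    (hVle : V ≤ 2 * η ^ N * quadNorm P2 (x 0 - xp)
      + 2 * ∑ j ∈ Finset.Icc 1 N, η ^ (j - 1) * quadNorm Q (w (N - j))) :
    W (xh N) (x N) ≤ 4 * η ^ N * quadNorm P2 (xp - x 0)
      + 4 * ∑ j ∈ Finset.Icc 1 N, η ^ (j - 1) * quadNorm Q (w (N - j)) := by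
  set D : ℕ → ℝ := fun j => quadNorm Q (wh (N - j) - w (N - j))
    + quadNorm R (h (xh (N - j)) (u (N - j)) (wh (N - j))
        - h (x (N - j)) (u (N - j)) (w (N - j))) with hD
  have key : ∀ k, k ≤ N → W (xh N) (x N)
      ≤ η ^ k * W (xh (N - k)) (x (N - k)) + ∑ j ∈ Finset.Icc 1 k, η ^ (j - 1) * D j := by
    intro k
    induction k with
    | zero => intro _; simp
    | succ k ih =>
      intro hk
      have hk' : k ≤ N := by omega
      have h1 := ih hk'
      have hlt : N - (k + 1) < N := by omega
      have heq : N - k = (N - (k + 1)) + 1 := by omega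
      have hd := hdiss (xh (N - (k + 1))) (x (N - (k + 1))) (u (N - (k + 1)))
        (wh (N - (k + 1))) (w (N - (k + 1))) (hxh _ hlt) (hx _ hlt) (hu _ hlt)
        (hwh _ hlt) (hw _ hlt) (hyh _ hlt) (hy _ hlt)
      rw [← hdynh _ hlt, ← hdyn _ hlt, ← heq] at hd
      have hsum : ∑ j ∈ Finset.Icc 1 (k + 1), η ^ (j - 1) * D j
          = (∑ j ∈ Finset.Icc 1 k, η ^ (j - 1) * D j) + η ^ k * D (k + 1) := by
        rw [Finset.sum_Icc_succ_top (by omega)]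
        simp
      have hpow : (0:ℝ) ≤ η ^ k := pow_nonneg hη0 k
      have h2 : η ^ k * W (xh (N - k)) (x (N - k))
          ≤ η ^ k * (η * W (xh (N - (k + 1))) (x (N - (k + 1))) + D (k + 1)) := by
        apply mul_le_mul_of_nonneg_left _ hpow
        simpa [hD, add_assoc] using hd
      rw [hsum]
      have h3 : η ^ k * (η * W (xh (N - (k + 1))) (x (N - (k + 1))) + D (k + 1))
          = η ^ (k + 1) * W (xh (N - (k + 1))) (x (N - (k + 1))) + η ^ k * D (k + 1) := by
        rw [pow_succ]; ring
      linarith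
  have hkey := key N le_rfl
  rw [Nat.sub_self] at hkey
  have h0N : 0 < N := hN
  have hb0 : W (xh 0) (x 0) ≤ quadNorm P2 (xh 0 - x 0) :=
    hWup _ _ (hxh 0 h0N) (hx 0 h0N)
  have hb1 : quadNorm P2 (xh 0 - x 0)
      ≤ 2 * quadNorm P2 (xh 0 - xp) + 2 * quadNorm P2 (xp - x 0) := by
    have := quadNorm_add_le hP2.posSemidef (xh 0 - xp) (xp - x 0)
    have heq : xh 0 - x 0 = (xh 0 - xp) + (xp - x 0) := by abel
    rw [heq]
    exact this
  have hpowN : (0:ℝ) ≤ η ^ N := pow_nonneg hη0 N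
  have hWbd : η ^ N * W (xh 0) (x 0)
      ≤ η ^ N * (2 * quadNorm P2 (xh 0 - xp) + 2 * quadNorm P2 (xp - x 0)) :=
    mul_le_mul_of_nonneg_left (le_trans hb0 hb1) hpowN
  have hsumle : ∑ j ∈ Finset.Icc 1 N, η ^ (j - 1) * D j
      ≤ (∑ j ∈ Finset.Icc 1 N, η ^ (j - 1) *
          (2 * quadNorm Q (wh (N - j))
            + quadNorm R (h (xh (N - j)) (u (N - j)) (wh (N - j))
                - h (x (N - j)) (u (N - j)) (w (N - j)))))
        + 2 * ∑ j ∈ Finset.Icc 1 N, η ^ (j - 1) * quadNorm Q (w (N - j)) := by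
    rw [Finset.mul_sum, ← Finset.sum_add_distrib]
    apply Finset.sum_le_sum
    intro j _
    have hq := quadNorm_sub_le hQ (wh (N - j)) (w (N - j))
    have hpow : (0:ℝ) ≤ η ^ (j - 1) := pow_nonneg hη0 _
    have h2 : D j ≤ 2 * quadNorm Q (wh (N - j))
        + quadNorm R (h (xh (N - j)) (u (N - j)) (wh (N - j))
            - h (x (N - j)) (u (N - j)) (w (N - j)))
        + 2 * quadNorm Q (w (N - j)) := by
      simp only [hD]
      linarith
    have h3 := mul_le_mul_of_nonneg_left h2 hpow
    calc η ^ (j - 1) * D j ≤ _ := h3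
      _ = η ^ (j - 1) * (2 * quadNorm Q (wh (N - j))
            + quadNorm R (h (xh (N - j)) (u (N - j)) (wh (N - j))
                - h (x (N - j)) (u (N - j)) (w (N - j))))
          + 2 * (η ^ (j - 1) * quadNorm Q (w (N - j))) := by ring
  have hcomm1 : quadNorm P2 (x 0 - xp) = quadNorm P2 (xp - x 0) :=
    quadNorm_sub_comm P2 (x 0) xp
  rw [hV] at hVle
  rw [hcomm1] at hVle
  nlinarith [hkey, hWbd, hsumle, hVle]
end

section
/- Suppose (i) W_l ≤ 4η^l·e₀² + 4·Σ_{j=1}^{l} η^{j−1} a_{l−j}² for every l ∈ {0,…,M−1}, and (ii) W_t ≤ ρ^M·W_{t−M} + 4·Σ_{j=1}^{M} η^{j−1} a_{t−j}² for every t ≥ M. Then for all t ∈ ℕ: W_t ≤ 4ρ^t·e₀² + 4·Σ_{q=0}^{t−1} ρ^q·a_{t−q−1}². (Sum-form exponential bound (26) in the proof of Corollary 1.) -/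
open Finset

/-- sum-form exponential bound (26) in the proof of Corollary 1. -/
theorem sum_form_exponential_bound
    (η ρ : ℝ) (hη0 : 0 ≤ η) (hη1 : η < 1) (hρ0 : 0 ≤ ρ) (hρ1 : ρ < 1) (hηρ : η ≤ ρ)
    (M : ℕ) (hM : 1 ≤ M)
    (W a : ℕ → ℝ) (hW : ∀ t, 0 ≤ W t) (ha : ∀ t, 0 ≤ a t)
    (e0 : ℝ) (he0 : 0 ≤ e0)
    (hinit : ∀ l < M, W l ≤ 4 * η ^ l * e0 ^ 2
      + 4 * ∑ j ∈ Finset.Icc 1 l, η ^ (j - 1) * a (l - j) ^ 2)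
    (hstep : ∀ t, M ≤ t → W t ≤ ρ ^ M * W (t - M)
      + 4 * ∑ j ∈ Finset.Icc 1 M, η ^ (j - 1) * a (t - j) ^ 2) :
    ∀ t, W t ≤ 4 * ρ ^ t * e0 ^ 2 + 4 * ∑ q ∈ Finset.range t, ρ ^ q * a (t - q - 1) ^ 2 := by
  have key : ∀ n b : ℕ, ∑ j ∈ Finset.Icc 1 n, η ^ (j - 1) * a (b - j) ^ 2
      ≤ ∑ q ∈ Finset.range n, ρ ^ q * a (b - q - 1) ^ 2 := by
    intro n b
    rw [show Finset.Icc 1 n = Finset.Ico 1 (n+1) by rw [Finset.Ico_add_one_right_eq_Icc],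
      Finset.sum_Ico_eq_sum_range]
    simp only [Nat.add_sub_cancel]
    apply Finset.sum_le_sum
    intro i _
    have h1 : 1 + i - 1 = i := by omega
    have h2 : b - (1 + i) = b - i - 1 := by omega
    rw [h1, h2]
    exact mul_le_mul_of_nonneg_right (pow_le_pow_left₀ hη0 hηρ i) (sq_nonneg _)
  intro t
  induction t using Nat.strong_induction_on with
  | _ t ih =>
    by_cases h : t < M
    · refine (hinit t h).trans ?_
      have h1 : η ^ t ≤ ρ ^ t := pow_le_pow_left₀ hη0 hηρ t
      have := key t t
      nlinarith [sq_nonneg e0]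
    · push_neg at h
      set s := t - M with hs
      have hts : t = M + s := by omega
      have hIH := ih s (by omega)
      have hstep' := hstep t h
      have hsum : ∑ q ∈ Finset.range t, ρ ^ q * a (t - q - 1) ^ 2
          = ∑ q ∈ Finset.range M, ρ ^ q * a (t - q - 1) ^ 2
            + ρ ^ M * ∑ q ∈ Finset.range s, ρ ^ q * a (s - q - 1) ^ 2 := by
        rw [hts, Finset.sum_range_add, Finset.mul_sum]
        congr 1
        apply Finset.sum_congr rfl
        intro q hq
        have : M + s - (M + q) - 1 = s - q - 1 := by omega
        rw [this, pow_add]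
        ring
      have hkey := key M t
      have hρM : (0:ℝ) ≤ ρ ^ M := pow_nonneg hρ0 M
      have hρt : ρ ^ M * ρ ^ s = ρ ^ t := by rw [← pow_add, ← hts]
      calc W t ≤ ρ ^ M * W s + 4 * ∑ j ∈ Finset.Icc 1 M, η ^ (j - 1) * a (t - j) ^ 2 :=
            hstep'
        _ ≤ ρ ^ M * (4 * ρ ^ s * e0 ^ 2 + 4 * ∑ q ∈ Finset.range s, ρ ^ q * a (s - q - 1) ^ 2)
              + 4 * ∑ q ∈ Finset.range M, ρ ^ q * a (t - q - 1) ^ 2 := by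
            gcongr
        _ = 4 * ρ ^ t * e0 ^ 2 + 4 * ∑ q ∈ Finset.range t, ρ ^ q * a (t - q - 1) ^ 2 := by
            rw [hsum, ← hρt]; ring
end

section
/- Let (x̂_0,…,x̂_t, ŵ_0,…,ŵ_{t−1}) be a feasible estimated trajectory whose FIE cost is at most that of the true trajectory used as a candidate, i.e. V_FIE ≤ η^t·α2(2‖x_0 − x̂_prior‖) + Σ_{j=1}^{t} η^{j−1}·σ_w(2‖w_{t−j}‖). Then W(x̂_t, x_t) ≤ 2η^t·α2(2·α1⁻¹(W(x̂_prior, x_0))) + 2·Σ_{j=1}^{t} η^{j−1}·σ_w(2‖w_{t−j}‖). (Proposition 2: bound on the δ-IOSS Lyapunov function for full information estimation.) -/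
open Finset

/-- Class-K splitting: γ c ≤ γ (2a) + γ (2b) when c ≤ a + b. -/
lemma K_split_aux (γ : ℝ → ℝ) (hmono : StrictMonoOn γ (Set.Ici 0))
    (hnn : ∀ s, 0 ≤ s → 0 ≤ γ s) {a b c : ℝ} (ha : 0 ≤ a) (hb : 0 ≤ b)
    (hc0 : 0 ≤ c) (hc : c ≤ a + b) : γ c ≤ γ (2 * a) + γ (2 * b) := by
  have hm := hmono.monotoneOn
  rcases le_total a b with hab | hab
  · have h1 : γ c ≤ γ (2 * b) :=
      hm (Set.mem_Ici.mpr hc0) (Set.mem_Ici.mpr (by positivity)) (by linarith)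
    have h2 := hnn (2 * a) (by positivity)
    linarith
  · have h1 : γ c ≤ γ (2 * a) :=
      hm (Set.mem_Ici.mpr hc0) (Set.mem_Ici.mpr (by positivity)) (by linarith)
    have h2 := hnn (2 * b) (by positivity)
    linarith

/-- Proposition 2: bound on the δ-IOSS Lyapunov function for
full information estimation. -/
theorem FIE_dIOSS_Lyapunov_bound
    {n m q p : ℕ}
    (f : EuclideanSpace ℝ (Fin n) → EuclideanSpace ℝ (Fin m) → EuclideanSpace ℝ (Fin q) →
      EuclideanSpace ℝ (Fin n))
    (h : EuclideanSpace ℝ (Fin n) → EuclideanSpace ℝ (Fin m) → EuclideanSpace ℝ (Fin q) →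
      EuclideanSpace ℝ (Fin p))
    (X : Set (EuclideanSpace ℝ (Fin n))) (U : Set (EuclideanSpace ℝ (Fin m)))
    (Wset : Set (EuclideanSpace ℝ (Fin q))) (Y : Set (EuclideanSpace ℝ (Fin p)))
    (W : EuclideanSpace ℝ (Fin n) → EuclideanSpace ℝ (Fin n) → ℝ)
    (hWnn : ∀ x xt, 0 ≤ W x xt)
    (α1 α2 σw σy : ℝ → ℝ)
    -- α1, α2 are class-K∞ functions, σw, σy are class-K functions
    (hα1cont : ContinuousOn α1 (Set.Ici 0)) (hα1mono : StrictMonoOn α1 (Set.Ici 0))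
    (hα10 : α1 0 = 0) (hα1nn : ∀ s, 0 ≤ s → 0 ≤ α1 s)
    (hα1surj : ∀ r, 0 ≤ r → ∃ s, 0 ≤ s ∧ α1 s = r)
    (hα2cont : ContinuousOn α2 (Set.Ici 0)) (hα2mono : StrictMonoOn α2 (Set.Ici 0))
    (hα20 : α2 0 = 0) (hα2nn : ∀ s, 0 ≤ s → 0 ≤ α2 s)
    (hα2surj : ∀ r, 0 ≤ r → ∃ s, 0 ≤ s ∧ α2 s = r)
    (hσwcont : ContinuousOn σw (Set.Ici 0)) (hσwmono : StrictMonoOn σw (Set.Ici 0))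
    (hσw0 : σw 0 = 0) (hσwnn : ∀ s, 0 ≤ s → 0 ≤ σw s)
    (hσycont : ContinuousOn σy (Set.Ici 0)) (hσymono : StrictMonoOn σy (Set.Ici 0))
    (hσy0 : σy 0 = 0) (hσynn : ∀ s, 0 ≤ s → 0 ≤ σy s)
    (η : ℝ) (hη0 : 0 ≤ η) (hη1 : η < 1)
    -- δ-IOSS Lyapunov function bounds and dissipation inequality
    (hWlow : ∀ x xt, x ∈ X → xt ∈ X → α1 ‖x - xt‖ ≤ W x xt)
    (hWup : ∀ x xt, x ∈ X → xt ∈ X → W x xt ≤ α2 ‖x - xt‖)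
    (hdiss : ∀ x xt u w wt, x ∈ X → xt ∈ X → u ∈ U → w ∈ Wset → wt ∈ Wset →
      h x u w ∈ Y → h xt u wt ∈ Y →
      W (f x u w) (f xt u wt) ≤ η * W x xt + σw ‖w - wt‖ + σy ‖h x u w - h xt u wt‖)
    -- time, true trajectory and prior
    (t : ℕ) (ht : 1 ≤ t)
    (u : ℕ → EuclideanSpace ℝ (Fin m)) (x : ℕ → EuclideanSpace ℝ (Fin n))
    (w : ℕ → EuclideanSpace ℝ (Fin q))
    (hu : ∀ j < t, u j ∈ U)
    (hx : ∀ j < t, x j ∈ X) (hw : ∀ j < t, w j ∈ Wset)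
    (hdyn : ∀ j < t, x (j + 1) = f (x j) (u j) (w j))
    (hy : ∀ j < t, h (x j) (u j) (w j) ∈ Y)
    (hxt : x t ∈ X)
    (xp : EuclideanSpace ℝ (Fin n)) (hxp : xp ∈ X)
    -- feasible estimated trajectory
    (xh : ℕ → EuclideanSpace ℝ (Fin n)) (wh : ℕ → EuclideanSpace ℝ (Fin q))
    (hxh : ∀ j < t, xh j ∈ X) (hwh : ∀ j < t, wh j ∈ Wset)
    (hdynh : ∀ j < t, xh (j + 1) = f (xh j) (u j) (wh j))
    (hyh : ∀ j < t, h (xh j) (u j) (wh j) ∈ Y)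
    (hxht : xh t ∈ X)
    -- its FIE cost
    (VFIE : ℝ)
    (hVFIE : VFIE = η ^ t * α2 (2 * ‖xh 0 - xp‖)
      + ∑ j ∈ Finset.Icc 1 t, η ^ (j - 1) *
          (σw (2 * ‖wh (t - j)‖)
            + σy ‖h (xh (t - j)) (u (t - j)) (wh (t - j))
                - h (x (t - j)) (u (t - j)) (w (t - j))‖))
    -- the FIE cost is at most the candidate cost of the true trajectory
    (hVle : VFIE ≤ η ^ t * α2 (2 * ‖x 0 - xp‖)
      + ∑ j ∈ Finset.Icc 1 t, η ^ (j - 1) * σw (2 * ‖w (t - j)‖))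
    -- inverse of the class-K∞ function α1
    (α1inv : ℝ → ℝ)
    (hα1inv_left : ∀ s, 0 ≤ s → α1inv (α1 s) = s)
    (hα1inv_right : ∀ r, 0 ≤ r → α1 (α1inv r) = r) :
    W (xh t) (x t) ≤ 2 * η ^ t * α2 (2 * α1inv (W xp (x 0)))
      + 2 * ∑ j ∈ Finset.Icc 1 t, η ^ (j - 1) * σw (2 * ‖w (t - j)‖) := by
  classical
  set c : ℕ → ℝ := fun i =>
    σw ‖wh i - w i‖ + σy ‖h (xh i) (u i) (wh i) - h (x i) (u i) (w i)‖ with hc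
  -- iterated dissipation inequality
  have main : ∀ k, k ≤ t → W (xh k) (x k) ≤
      η ^ k * W (xh 0) (x 0) + ∑ i ∈ Finset.range k, η ^ (k - 1 - i) * c i := by
    intro k
    induction k with
    | zero => intro _; simp
    | succ k ih =>
      intro hk1
      have hkt : k < t := by omega
      have ihk := ih (by omega)
      have hstep : W (xh (k + 1)) (x (k + 1)) ≤ η * W (xh k) (x k) + c k := by
        rw [hdyn k hkt, hdynh k hkt]
        have := hdiss (xh k) (x k) (u k) (wh k) (w k) (hxh k hkt) (hx k hkt)
          (hu k hkt) (hwh k hkt) (hw k hkt) (hyh k hkt) (hy k hkt)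
        simp only [hc]
        linarith
      have hsum : ∑ i ∈ Finset.range (k + 1), η ^ (k + 1 - 1 - i) * c i
          = η * ∑ i ∈ Finset.range k, η ^ (k - 1 - i) * c i + c k := by
        rw [Finset.sum_range_succ, Finset.mul_sum]
        have h1 : ∀ i ∈ Finset.range k,
            η ^ (k + 1 - 1 - i) * c i = η * (η ^ (k - 1 - i) * c i) := by
          intro i hi
          have hik : i < k := Finset.mem_range.mp hi
          have : k + 1 - 1 - i = (k - 1 - i) + 1 := by omega
          rw [this, pow_succ]
          ring
        rw [Finset.sum_congr rfl h1]
        simp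
      have hmul : η * W (xh k) (x k) ≤
          η * (η ^ k * W (xh 0) (x 0) + ∑ i ∈ Finset.range k, η ^ (k - 1 - i) * c i) :=
        mul_le_mul_of_nonneg_left ihk hη0
      rw [hsum]
      have : η ^ (k + 1) = η * η ^ k := by ring
      rw [this]
      linarith
  have hWt := main t le_rfl
  -- reindex the sum
  have reidx : ∀ g : ℕ → ℝ,
      ∑ i ∈ Finset.range t, η ^ (t - 1 - i) * g i
        = ∑ j ∈ Finset.Icc 1 t, η ^ (j - 1) * g (t - j) := by
    intro g
    rw [← Finset.Ico_add_one_right_eq_Icc, Finset.sum_Ico_eq_sum_range]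
    rw [← Finset.sum_range_reflect (fun i => η ^ (t - 1 - i) * g i) t]
    apply Finset.sum_congr rfl
    intro i hi
    have hit : i < t := Finset.mem_range.mp (by simpa using hi)
    have h1 : t - 1 - (t - 1 - i) = i := by omega
    have h2 : 1 + i - 1 = i := by omega
    have h3 : t - (1 + i) = t - 1 - i := by omega
    simp only [h1, h2, h3]
  rw [reidx c] at hWt
  -- bound on the initial term
  have hx0 : x 0 ∈ X := hx 0 (by omega)
  have hxh0 : xh 0 ∈ X := hxh 0 (by omega)
  have hW0 : W (xh 0) (x 0) ≤ α2 (2 * ‖xh 0 - xp‖) + α2 (2 * ‖xp - x 0‖) := by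
    have h1 : W (xh 0) (x 0) ≤ α2 ‖xh 0 - x 0‖ := hWup _ _ hxh0 hx0
    have h2 : ‖xh 0 - x 0‖ ≤ ‖xh 0 - xp‖ + ‖xp - x 0‖ := norm_sub_le_norm_sub_add_norm_sub _ _ _
    have h3 : α2 ‖xh 0 - x 0‖ ≤ α2 (2 * ‖xh 0 - xp‖) + α2 (2 * ‖xp - x 0‖) :=
      K_split_aux α2 hα2mono hα2nn (norm_nonneg _) (norm_nonneg _) (norm_nonneg _) h2
    linarith
  -- bound each disturbance term
  have hcbound : ∀ j ∈ Finset.Icc 1 t, η ^ (j - 1) * c (t - j) ≤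
      η ^ (j - 1) * ((σw (2 * ‖wh (t - j)‖)
        + σy ‖h (xh (t - j)) (u (t - j)) (wh (t - j)) - h (x (t - j)) (u (t - j)) (w (t - j))‖)
        + σw (2 * ‖w (t - j)‖)) := by
    intro j hj
    have hj' := Finset.mem_Icc.mp hj
    apply mul_le_mul_of_nonneg_left _ (pow_nonneg hη0 _)
    have h2 : ‖wh (t - j) - w (t - j)‖ ≤ ‖wh (t - j)‖ + ‖w (t - j)‖ := norm_sub_le _ _
    have h3 : σw ‖wh (t - j) - w (t - j)‖ ≤ σw (2 * ‖wh (t - j)‖) + σw (2 * ‖w (t - j)‖) :=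
      K_split_aux σw hσwmono hσwnn (norm_nonneg _) (norm_nonneg _) (norm_nonneg _) h2
    simp only [hc]
    linarith
  have hsumc : ∑ j ∈ Finset.Icc 1 t, η ^ (j - 1) * c (t - j) ≤
      (∑ j ∈ Finset.Icc 1 t, η ^ (j - 1) *
        (σw (2 * ‖wh (t - j)‖)
          + σy ‖h (xh (t - j)) (u (t - j)) (wh (t - j)) - h (x (t - j)) (u (t - j)) (w (t - j))‖))
      + ∑ j ∈ Finset.Icc 1 t, η ^ (j - 1) * σw (2 * ‖w (t - j)‖) := by
    calc ∑ j ∈ Finset.Icc 1 t, η ^ (j - 1) * c (t - j)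
        ≤ ∑ j ∈ Finset.Icc 1 t, η ^ (j - 1) * ((σw (2 * ‖wh (t - j)‖)
            + σy ‖h (xh (t - j)) (u (t - j)) (wh (t - j))
              - h (x (t - j)) (u (t - j)) (w (t - j))‖) + σw (2 * ‖w (t - j)‖)) :=
          Finset.sum_le_sum hcbound
      _ = _ := by rw [← Finset.sum_add_distrib]; apply Finset.sum_congr rfl; intro j _; ring
  -- bound ‖xp - x 0‖ by α1inv (W xp (x 0))
  have hWpnn : (0:ℝ) ≤ W xp (x 0) := hWnn _ _
  obtain ⟨s, hs0, hsW⟩ := hα1surj _ hWpnn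
  have hinv : α1inv (W xp (x 0)) = s := by rw [← hsW, hα1inv_left s hs0]
  have hle_s : ‖xp - x 0‖ ≤ s := by
    have h1 : α1 ‖xp - x 0‖ ≤ α1 s := by rw [hsW]; exact hWlow xp (x 0) hxp hx0
    exact (hα1mono.le_iff_le (Set.mem_Ici.mpr (norm_nonneg _)) (Set.mem_Ici.mpr hs0)).mp h1
  have ha2 : α2 (2 * ‖xp - x 0‖) ≤ α2 (2 * α1inv (W xp (x 0))) := by
    rw [hinv]
    exact hα2mono.monotoneOn (Set.mem_Ici.mpr (by positivity))
      (Set.mem_Ici.mpr (by positivity)) (by linarith)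
  have hnormrev : ‖x 0 - xp‖ = ‖xp - x 0‖ := norm_sub_rev _ _
  have hpt : (0:ℝ) ≤ η ^ t := pow_nonneg hη0 _
  -- put everything together
  have key : W (xh t) (x t) ≤ VFIE + η ^ t * α2 (2 * ‖xp - x 0‖)
      + ∑ j ∈ Finset.Icc 1 t, η ^ (j - 1) * σw (2 * ‖w (t - j)‖) := by
    have hmulW : η ^ t * W (xh 0) (x 0) ≤
        η ^ t * (α2 (2 * ‖xh 0 - xp‖) + α2 (2 * ‖xp - x 0‖)) :=
      mul_le_mul_of_nonneg_left hW0 hpt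
    rw [hVFIE]
    linarith
  have hfin : η ^ t * α2 (2 * ‖x 0 - xp‖) ≤ η ^ t * α2 (2 * α1inv (W xp (x 0))) := by
    rw [hnormrev]
    exact mul_le_mul_of_nonneg_left ha2 hpt
  have hfin2 : η ^ t * α2 (2 * ‖xp - x 0‖) ≤ η ^ t * α2 (2 * α1inv (W xp (x 0))) :=
    mul_le_mul_of_nonneg_left ha2 hpt
  linarith
end

section
/- Let (x̂_0,…,x̂_t, ŵ_0,…,ŵ_{t−1}) be a feasible estimated trajectory whose FIE cost is at most that of the true trajectory used as a candidate, i.e. V_FIE ≤ η^t·α2(2‖x_0 − x̂_prior‖) + Σ_{j=1}^{t} η^{j−1}·σ_w(2‖w_{t−j}‖). Then the full information estimation error satisfies ‖x̂_t − x_t‖ ≤ max{ 2·α1⁻¹(4η^t·α2(2‖x̂_prior − x_0‖)), max_{j∈{0,…,t−1}} 2·α1⁻¹((4/(1−η^{1/2}))·η^{j/2}·σ_w(2‖w_{t−j−1}‖)) }; i.e. full information estimation is robustly globally asymptotically stable. -/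
open Finset

/-- full information estimation is robustly globally asymptotically stable. -/
theorem FIE_is_RGAS
    {n m q p : ℕ}
    (f : EuclideanSpace ℝ (Fin n) → EuclideanSpace ℝ (Fin m) → EuclideanSpace ℝ (Fin q) →
      EuclideanSpace ℝ (Fin n))
    (h : EuclideanSpace ℝ (Fin n) → EuclideanSpace ℝ (Fin m) → EuclideanSpace ℝ (Fin q) →
      EuclideanSpace ℝ (Fin p))
    (X : Set (EuclideanSpace ℝ (Fin n))) (U : Set (EuclideanSpace ℝ (Fin m)))
    (Wset : Set (EuclideanSpace ℝ (Fin q))) (Y : Set (EuclideanSpace ℝ (Fin p)))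
    (W : EuclideanSpace ℝ (Fin n) → EuclideanSpace ℝ (Fin n) → ℝ)
    (hWnn : ∀ x xt, 0 ≤ W x xt)
    (α1 α2 σw σy : ℝ → ℝ)
    -- α1, α2 are class-K∞ functions, σw, σy are class-K functions
    (hα1cont : ContinuousOn α1 (Set.Ici 0)) (hα1mono : StrictMonoOn α1 (Set.Ici 0))
    (hα10 : α1 0 = 0) (hα1nn : ∀ s, 0 ≤ s → 0 ≤ α1 s)
    (hα1surj : ∀ r, 0 ≤ r → ∃ s, 0 ≤ s ∧ α1 s = r)
    (hα2cont : ContinuousOn α2 (Set.Ici 0)) (hα2mono : StrictMonoOn α2 (Set.Ici 0))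
    (hα20 : α2 0 = 0) (hα2nn : ∀ s, 0 ≤ s → 0 ≤ α2 s)
    (hα2surj : ∀ r, 0 ≤ r → ∃ s, 0 ≤ s ∧ α2 s = r)
    (hσwcont : ContinuousOn σw (Set.Ici 0)) (hσwmono : StrictMonoOn σw (Set.Ici 0))
    (hσw0 : σw 0 = 0) (hσwnn : ∀ s, 0 ≤ s → 0 ≤ σw s)
    (hσycont : ContinuousOn σy (Set.Ici 0)) (hσymono : StrictMonoOn σy (Set.Ici 0))
    (hσy0 : σy 0 = 0) (hσynn : ∀ s, 0 ≤ s → 0 ≤ σy s)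
    (η : ℝ) (hη0 : 0 ≤ η) (hη1 : η < 1)
    -- δ-IOSS Lyapunov function bounds and dissipation inequality
    (hWlow : ∀ x xt, x ∈ X → xt ∈ X → α1 ‖x - xt‖ ≤ W x xt)
    (hWup : ∀ x xt, x ∈ X → xt ∈ X → W x xt ≤ α2 ‖x - xt‖)
    (hdiss : ∀ x xt u w wt, x ∈ X → xt ∈ X → u ∈ U → w ∈ Wset → wt ∈ Wset →
      h x u w ∈ Y → h xt u wt ∈ Y →
      W (f x u w) (f xt u wt) ≤ η * W x xt + σw ‖w - wt‖ + σy ‖h x u w - h xt u wt‖)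
    -- time, true trajectory and prior
    (t : ℕ) (ht : 1 ≤ t)
    (u : ℕ → EuclideanSpace ℝ (Fin m)) (x : ℕ → EuclideanSpace ℝ (Fin n))
    (w : ℕ → EuclideanSpace ℝ (Fin q))
    (hu : ∀ j < t, u j ∈ U)
    (hx : ∀ j < t, x j ∈ X) (hw : ∀ j < t, w j ∈ Wset)
    (hdyn : ∀ j < t, x (j + 1) = f (x j) (u j) (w j))
    (hy : ∀ j < t, h (x j) (u j) (w j) ∈ Y)
    (hxt : x t ∈ X)
    (xp : EuclideanSpace ℝ (Fin n)) (hxp : xp ∈ X)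
    -- feasible estimated trajectory
    (xh : ℕ → EuclideanSpace ℝ (Fin n)) (wh : ℕ → EuclideanSpace ℝ (Fin q))
    (hxh : ∀ j < t, xh j ∈ X) (hwh : ∀ j < t, wh j ∈ Wset)
    (hdynh : ∀ j < t, xh (j + 1) = f (xh j) (u j) (wh j))
    (hyh : ∀ j < t, h (xh j) (u j) (wh j) ∈ Y)
    (hxht : xh t ∈ X)
    -- its FIE cost
    (VFIE : ℝ)
    (hVFIE : VFIE = η ^ t * α2 (2 * ‖xh 0 - xp‖)
      + ∑ j ∈ Finset.Icc 1 t, η ^ (j - 1) *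
          (σw (2 * ‖wh (t - j)‖)
            + σy ‖h (xh (t - j)) (u (t - j)) (wh (t - j))
                - h (x (t - j)) (u (t - j)) (w (t - j))‖))
    -- the FIE cost is at most the candidate cost of the true trajectory
    (hVle : VFIE ≤ η ^ t * α2 (2 * ‖x 0 - xp‖)
      + ∑ j ∈ Finset.Icc 1 t, η ^ (j - 1) * σw (2 * ‖w (t - j)‖))
    -- inverse of the class-K∞ function α1
    (α1inv : ℝ → ℝ)
    (hα1inv_left : ∀ s, 0 ≤ s → α1inv (α1 s) = s)
    (hα1inv_right : ∀ r, 0 ≤ r → α1 (α1inv r) = r) :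
    ‖xh t - x t‖ ≤
      max (2 * α1inv (4 * η ^ t * α2 (2 * ‖xp - x 0‖)))
        ((Finset.range t).sup' (Finset.nonempty_range_iff.mpr (by omega))
          (fun j => 2 * α1inv (4 / (1 - Real.sqrt η) * Real.sqrt η ^ j
            * σw (2 * ‖w (t - j - 1)‖)))) := by
  classical
  have ht0 : 0 < t := ht
  set e := Real.sqrt η with he
  have he0 : 0 ≤ e := Real.sqrt_nonneg η
  have he1 : e < 1 := by
    rw [he]
    have := Real.sqrt_lt' (y := 1) one_pos (x := η)
    rw [this]; nlinarith
  have hesq : e * e = η := Real.mul_self_sqrt hη0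
  have hden : 0 < 1 - e := by linarith
  -- class-K split lemma
  have ksplit : ∀ (σ : ℝ → ℝ), StrictMonoOn σ (Set.Ici 0) → (∀ s, 0 ≤ s → 0 ≤ σ s) →
      ∀ a b c : ℝ, 0 ≤ a → 0 ≤ b → 0 ≤ c → c ≤ a + b → σ c ≤ σ (2*a) + σ (2*b) := by
    intro σ hm hnn a b c ha hb hc hab
    rcases le_total a b with hab' | hab'
    · have h1 : σ c ≤ σ (2*b) :=
        hm.monotoneOn (Set.mem_Ici.mpr hc) (Set.mem_Ici.mpr (by linarith)) (by linarith)
      have h2 : 0 ≤ σ (2*a) := hnn _ (by linarith)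
      linarith
    · have h1 : σ c ≤ σ (2*a) :=
        hm.monotoneOn (Set.mem_Ici.mpr hc) (Set.mem_Ici.mpr (by linarith)) (by linarith)
      have h2 : 0 ≤ σ (2*b) := hnn _ (by linarith)
      linarith
  set g : ℕ → ℝ := fun i => σw (2 * ‖wh i‖) + σw (2 * ‖w i‖) +
    σy ‖h (xh i) (u i) (wh i) - h (x i) (u i) (w i)‖ with hg
  set Fa : ℕ → ℝ := fun i => σw (2 * ‖wh i‖) +
    σy ‖h (xh i) (u i) (wh i) - h (x i) (u i) (w i)‖ with hFa
  set Fb : ℕ → ℝ := fun i => σw (2 * ‖w i‖) with hFb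
  -- key induction
  have key : ∀ k, k ≤ t → W (xh k) (x k) ≤ η ^ k * W (xh 0) (x 0) +
      ∑ i ∈ Finset.range k, η ^ (k - 1 - i) * g i := by
    intro k
    induction k with
    | zero => intro _; simp
    | succ k ih =>
      intro hk1
      have hk : k < t := hk1
      have ihk := ih (le_of_lt hk)
      have d1 := hdiss (xh k) (x k) (u k) (wh k) (w k) (hxh k hk) (hx k hk) (hu k hk)
        (hwh k hk) (hw k hk) (hyh k hk) (hy k hk)
      have split := ksplit σw hσwmono hσwnn ‖wh k‖ ‖w k‖ ‖wh k - w k‖ (norm_nonneg _)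
        (norm_nonneg _) (norm_nonneg _) (norm_sub_le _ _)
      have hsum : η * ∑ i ∈ Finset.range k, η ^ (k - 1 - i) * g i + g k =
          ∑ i ∈ Finset.range (k+1), η ^ (k + 1 - 1 - i) * g i := by
        rw [Finset.mul_sum, Finset.sum_range_succ]
        congr 1
        · apply Finset.sum_congr rfl
          intro i hi
          have hik : i < k := Finset.mem_range.mp hi
          rw [← mul_assoc, ← pow_succ']
          congr 2
          omega
        · rw [show k + 1 - 1 - k = 0 from by omega, pow_zero, one_mul]
      have hmul := mul_le_mul_of_nonneg_left ihk hη0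
      rw [hdynh k hk, hdyn k hk]
      have hgk : g k = σw (2 * ‖wh k‖) + σw (2 * ‖w k‖) +
          σy ‖h (xh k) (u k) (wh k) - h (x k) (u k) (w k)‖ := by rw [hg]
      have hpow : η * (η ^ k * W (xh 0) (x 0)) = η ^ (k+1) * W (xh 0) (x 0) := by ring
      nlinarith [d1, hmul, split, hsum, hgk, hpow]
  -- reindexing lemma
  have reindex : ∀ F : ℕ → ℝ, ∑ j ∈ Finset.Icc 1 t, η ^ (j - 1) * F (t - j) =
      ∑ i ∈ Finset.range t, η ^ (t - 1 - i) * F i := by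
    intro F
    rw [← Finset.Ico_add_one_right_eq_Icc, Finset.sum_Ico_eq_sum_range]
    rw [show t + 1 - 1 = t from rfl]
    rw [← Finset.sum_range_reflect (fun i => η ^ (t - 1 - i) * F i) t]
    apply Finset.sum_congr rfl
    intro j hj
    have hj' : j < t := Finset.mem_range.mp hj
    show η ^ (1 + j - 1) * F (t - (1 + j)) = η ^ (t - 1 - (t - 1 - j)) * F (t - 1 - j)
    rw [show 1 + j - 1 = t - 1 - (t - 1 - j) from by omega,
      show t - (1 + j) = t - 1 - j from by omega]
  have hA := reindex Fa
  have hB := reindex Fb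
  have h3 : ∑ i ∈ Finset.range t, η ^ (t - 1 - i) * g i =
      (∑ i ∈ Finset.range t, η ^ (t - 1 - i) * Fa i) +
      ∑ i ∈ Finset.range t, η ^ (t - 1 - i) * Fb i := by
    rw [← Finset.sum_add_distrib]
    apply Finset.sum_congr rfl
    intro i _
    simp only [hg, hFa, hFb]
    ring
  -- W0 bound
  have hW0 : W (xh 0) (x 0) ≤ α2 (2 * ‖xh 0 - xp‖) + α2 (2 * ‖xp - x 0‖) := by
    refine le_trans (hWup _ _ (hxh 0 ht0) (hx 0 ht0)) ?_
    refine ksplit α2 hα2mono hα2nn ‖xh 0 - xp‖ ‖xp - x 0‖ ‖xh 0 - x 0‖ (norm_nonneg _)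
      (norm_nonneg _) (norm_nonneg _) ?_
    have := dist_triangle (xh 0) xp (x 0)
    simpa [dist_eq_norm] using this
  -- rewrite VFIE hypotheses
  have h5 : VFIE = η ^ t * α2 (2 * ‖xh 0 - xp‖) +
      ∑ i ∈ Finset.range t, η ^ (t - 1 - i) * Fa i := by
    rw [hVFIE, ← hA]
  have h6 : VFIE ≤ η ^ t * α2 (2 * ‖xp - x 0‖) +
      ∑ i ∈ Finset.range t, η ^ (t - 1 - i) * Fb i := by
    rw [norm_sub_rev xp (x 0)]
    calc VFIE ≤ η ^ t * α2 (2 * ‖x 0 - xp‖) +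
        ∑ j ∈ Finset.Icc 1 t, η ^ (j - 1) * σw (2 * ‖w (t - j)‖) := hVle
      _ = η ^ t * α2 (2 * ‖x 0 - xp‖) +
          ∑ i ∈ Finset.range t, η ^ (t - 1 - i) * Fb i := by
        rw [← hB]
  -- sup' definitions
  have hne : (Finset.range t).Nonempty := Finset.nonempty_range_iff.mpr (by omega)
  set M := (Finset.range t).sup' hne
      (fun j => e ^ j * σw (2 * ‖w (t - j - 1)‖)) with hM
  have hMnn : 0 ≤ M := by
    refine le_trans ?_ (Finset.le_sup' (f := fun j => e ^ j * σw (2 * ‖w (t - j - 1)‖))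
      (Finset.mem_range.mpr ht0))
    exact mul_nonneg (pow_nonneg he0 _) (hσwnn _ (by positivity))
  -- geometric bound on SB
  have hrefl : (∑ i ∈ Finset.range t, η ^ (t - 1 - i) * Fb i) =
      ∑ j ∈ Finset.range t, η ^ j * σw (2 * ‖w (t - j - 1)‖) := by
    rw [← Finset.sum_range_reflect (fun j => η ^ j * σw (2 * ‖w (t - j - 1)‖)) t]
    apply Finset.sum_congr rfl
    intro i hi
    have hi' : i < t := Finset.mem_range.mp hi
    simp only [hFb]
    rw [show t - (t - 1 - i) - 1 = i from by omega]
  have hgeom : ∑ j ∈ Finset.range t, e ^ j ≤ (1 - e)⁻¹ := by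
    rw [geom_sum_eq (ne_of_lt he1) t]
    have heq : (e ^ t - 1) / (e - 1) = (1 - e ^ t) * (1 - e)⁻¹ := by
      rw [← neg_div_neg_eq, neg_sub, neg_sub, div_eq_mul_inv]
    rw [heq]
    have h1 : 1 - e ^ t ≤ 1 := by nlinarith [pow_nonneg he0 t]
    calc (1 - e ^ t) * (1 - e)⁻¹ ≤ 1 * (1 - e)⁻¹ :=
          mul_le_mul_of_nonneg_right h1 (by positivity)
      _ = (1 - e)⁻¹ := one_mul _
  have hSBle : (∑ i ∈ Finset.range t, η ^ (t - 1 - i) * Fb i) ≤ (1 - e)⁻¹ * M := by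
    rw [hrefl]
    calc ∑ j ∈ Finset.range t, η ^ j * σw (2 * ‖w (t - j - 1)‖)
        ≤ ∑ j ∈ Finset.range t, e ^ j * M := by
          apply Finset.sum_le_sum
          intro j hj
          have h1 : η ^ j = e ^ j * e ^ j := by rw [← hesq, mul_pow]
          have h2 : e ^ j * σw (2 * ‖w (t - j - 1)‖) ≤ M :=
            Finset.le_sup' (f := fun j => e ^ j * σw (2 * ‖w (t - j - 1)‖)) hj
          calc η ^ j * σw (2 * ‖w (t - j - 1)‖)
              = e ^ j * (e ^ j * σw (2 * ‖w (t - j - 1)‖)) := by rw [h1]; ring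
            _ ≤ e ^ j * M := mul_le_mul_of_nonneg_left h2 (pow_nonneg he0 _)
      _ = (∑ j ∈ Finset.range t, e ^ j) * M := by rw [Finset.sum_mul]
      _ ≤ (1 - e)⁻¹ * M := mul_le_mul_of_nonneg_right hgeom hMnn
  -- main inequality
  have h1 : α1 ‖xh t - x t‖ ≤ W (xh t) (x t) := hWlow _ _ hxht hxt
  have h2 := key t le_rfl
  have h4 : η ^ t * W (xh 0) (x 0) ≤
      η ^ t * (α2 (2 * ‖xh 0 - xp‖) + α2 (2 * ‖xp - x 0‖)) :=
    mul_le_mul_of_nonneg_left hW0 (pow_nonneg hη0 t)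
  have h4' : η ^ t * (α2 (2 * ‖xh 0 - xp‖) + α2 (2 * ‖xp - x 0‖)) =
      η ^ t * α2 (2 * ‖xh 0 - xp‖) + η ^ t * α2 (2 * ‖xp - x 0‖) := mul_add _ _ _
  have hfinal : α1 ‖xh t - x t‖ ≤
      2 * (η ^ t * α2 (2 * ‖xp - x 0‖)) + 2 * ((1 - e)⁻¹ * M) := by
    rw [h3] at h2
    linarith
  -- inverse function facts
  have hinvnn : ∀ r, 0 ≤ r → 0 ≤ α1inv r := by
    intro r hr
    obtain ⟨s, hs, hsr⟩ := hα1surj r hr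
    rw [← hsr, hα1inv_left s hs]
    exact hs
  have hinvle : ∀ r, 0 ≤ r → α1 ‖xh t - x t‖ ≤ r → ‖xh t - x t‖ ≤ α1inv r := by
    intro r hr hle
    by_contra hcon
    push_neg at hcon
    have hco := hα1mono (Set.mem_Ici.mpr (hinvnn r hr)) (Set.mem_Ici.mpr (norm_nonneg _)) hcon
    rw [hα1inv_right r hr] at hco
    linarith
  rcases le_total ((1 - e)⁻¹ * M) (η ^ t * α2 (2 * ‖xp - x 0‖)) with hc | hc
  · refine le_trans ?_ (le_max_left _ _)
    have hnn1 : (0:ℝ) ≤ 4 * η ^ t * α2 (2 * ‖xp - x 0‖) := by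
      have := hα2nn (2 * ‖xp - x 0‖) (by positivity)
      positivity
    have heq4 : 4 * η ^ t * α2 (2 * ‖xp - x 0‖) =
        4 * (η ^ t * α2 (2 * ‖xp - x 0‖)) := by ring
    have hle4 : α1 ‖xh t - x t‖ ≤ 4 * η ^ t * α2 (2 * ‖xp - x 0‖) := by
      rw [heq4]; linarith
    have := hinvle _ hnn1 hle4
    have hn2 := hinvnn _ hnn1
    linarith
  · refine le_trans ?_ (le_max_right _ _)
    obtain ⟨j0, hj0mem, hj0eq⟩ :=
      Finset.exists_mem_eq_sup' hne (fun j => e ^ j * σw (2 * ‖w (t - j - 1)‖))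
    have hval : 4 / (1 - e) * e ^ j0 * σw (2 * ‖w (t - j0 - 1)‖) =
        4 * ((1 - e)⁻¹ * M) := by
      rw [hM, hj0eq]
      field_simp
    have hnn1 : (0:ℝ) ≤ 4 / (1 - e) * e ^ j0 * σw (2 * ‖w (t - j0 - 1)‖) := by
      have := hσwnn (2 * ‖w (t - j0 - 1)‖) (by positivity)
      positivity
    have hle4 : α1 ‖xh t - x t‖ ≤ 4 / (1 - e) * e ^ j0 * σw (2 * ‖w (t - j0 - 1)‖) := by
      rw [hval]; linarith
    have hle5 := hinvle _ hnn1 hle4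
    have hn2 := hinvnn _ hnn1
    refine le_trans ?_ (Finset.le_sup'
      (f := fun j => 2 * α1inv (4 / (1 - e) * e ^ j * σw (2 * ‖w (t - j - 1)‖))) hj0mem)
    linarith
end

section
/- Every feasible estimated trajectory (x̂_0,…,x̂_t, ŵ_0,…,ŵ_{t−1}) with FIE cost V_FIE satisfies W(x̂_t, x_t) ≤ η^t·α2(2‖x̂_prior − x_0‖) + V_FIE + Σ_{j=1}^{t} η^{j−1}·σ_w(2‖w_{t−j}‖). (Intermediate value-function bound in the proof of Proposition 2, obtained from iterated dissipation and the weak triangle inequality for class-K functions.) -/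
open Finset

/-- intermediate value-function bound in the proof of Proposition 2. -/
theorem FIE_value_function_bound
    {n m q p : ℕ}
    (f : EuclideanSpace ℝ (Fin n) → EuclideanSpace ℝ (Fin m) → EuclideanSpace ℝ (Fin q) →
      EuclideanSpace ℝ (Fin n))
    (h : EuclideanSpace ℝ (Fin n) → EuclideanSpace ℝ (Fin m) → EuclideanSpace ℝ (Fin q) →
      EuclideanSpace ℝ (Fin p))
    (X : Set (EuclideanSpace ℝ (Fin n))) (U : Set (EuclideanSpace ℝ (Fin m)))
    (Wset : Set (EuclideanSpace ℝ (Fin q))) (Y : Set (EuclideanSpace ℝ (Fin p)))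
    (W : EuclideanSpace ℝ (Fin n) → EuclideanSpace ℝ (Fin n) → ℝ)
    (hWnn : ∀ x xt, 0 ≤ W x xt)
    (α1 α2 σw σy : ℝ → ℝ)
    -- α1, α2 are class-K∞ functions, σw, σy are class-K functions
    (hα1cont : ContinuousOn α1 (Set.Ici 0)) (hα1mono : StrictMonoOn α1 (Set.Ici 0))
    (hα10 : α1 0 = 0) (hα1nn : ∀ s, 0 ≤ s → 0 ≤ α1 s)
    (hα1surj : ∀ r, 0 ≤ r → ∃ s, 0 ≤ s ∧ α1 s = r)
    (hα2cont : ContinuousOn α2 (Set.Ici 0)) (hα2mono : StrictMonoOn α2 (Set.Ici 0))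
    (hα20 : α2 0 = 0) (hα2nn : ∀ s, 0 ≤ s → 0 ≤ α2 s)
    (hα2surj : ∀ r, 0 ≤ r → ∃ s, 0 ≤ s ∧ α2 s = r)
    (hσwcont : ContinuousOn σw (Set.Ici 0)) (hσwmono : StrictMonoOn σw (Set.Ici 0))
    (hσw0 : σw 0 = 0) (hσwnn : ∀ s, 0 ≤ s → 0 ≤ σw s)
    (hσycont : ContinuousOn σy (Set.Ici 0)) (hσymono : StrictMonoOn σy (Set.Ici 0))
    (hσy0 : σy 0 = 0) (hσynn : ∀ s, 0 ≤ s → 0 ≤ σy s)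
    (η : ℝ) (hη0 : 0 ≤ η) (hη1 : η < 1)
    -- δ-IOSS Lyapunov function bounds and dissipation inequality
    (hWlow : ∀ x xt, x ∈ X → xt ∈ X → α1 ‖x - xt‖ ≤ W x xt)
    (hWup : ∀ x xt, x ∈ X → xt ∈ X → W x xt ≤ α2 ‖x - xt‖)
    (hdiss : ∀ x xt u w wt, x ∈ X → xt ∈ X → u ∈ U → w ∈ Wset → wt ∈ Wset →
      h x u w ∈ Y → h xt u wt ∈ Y →
      W (f x u w) (f xt u wt) ≤ η * W x xt + σw ‖w - wt‖ + σy ‖h x u w - h xt u wt‖)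
    -- time, true trajectory and prior
    (t : ℕ) (ht : 1 ≤ t)
    (u : ℕ → EuclideanSpace ℝ (Fin m)) (x : ℕ → EuclideanSpace ℝ (Fin n))
    (w : ℕ → EuclideanSpace ℝ (Fin q))
    (hu : ∀ j < t, u j ∈ U)
    (hx : ∀ j < t, x j ∈ X) (hw : ∀ j < t, w j ∈ Wset)
    (hdyn : ∀ j < t, x (j + 1) = f (x j) (u j) (w j))
    (hy : ∀ j < t, h (x j) (u j) (w j) ∈ Y)
    (hxt : x t ∈ X)
    (xp : EuclideanSpace ℝ (Fin n)) (hxp : xp ∈ X)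
    -- feasible estimated trajectory
    (xh : ℕ → EuclideanSpace ℝ (Fin n)) (wh : ℕ → EuclideanSpace ℝ (Fin q))
    (hxh : ∀ j < t, xh j ∈ X) (hwh : ∀ j < t, wh j ∈ Wset)
    (hdynh : ∀ j < t, xh (j + 1) = f (xh j) (u j) (wh j))
    (hyh : ∀ j < t, h (xh j) (u j) (wh j) ∈ Y)
    (hxht : xh t ∈ X)
    -- its FIE cost
    (VFIE : ℝ)
    (hVFIE : VFIE = η ^ t * α2 (2 * ‖xh 0 - xp‖)
      + ∑ j ∈ Finset.Icc 1 t, η ^ (j - 1) *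
          (σw (2 * ‖wh (t - j)‖)
            + σy ‖h (xh (t - j)) (u (t - j)) (wh (t - j))
                - h (x (t - j)) (u (t - j)) (w (t - j))‖))
    :
    W (xh t) (x t) ≤ η ^ t * α2 (2 * ‖xp - x 0‖) + VFIE
      + ∑ j ∈ Finset.Icc 1 t, η ^ (j - 1) * σw (2 * ‖w (t - j)‖) := by

  -- weak triangle inequality for monotone nonnegative functions
  have weak : ∀ (α : ℝ → ℝ), StrictMonoOn α (Set.Ici 0) → (∀ s, 0 ≤ s → 0 ≤ α s) →
      ∀ s a b : ℝ, 0 ≤ a → 0 ≤ b → 0 ≤ s → s ≤ a + b → α s ≤ α (2 * a) + α (2 * b) := by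
    intro α hmono hnn s a b ha hb hs hsab
    rcases le_total a b with hab | hab
    · have h1 : α s ≤ α (2 * b) :=
        hmono.monotoneOn (Set.mem_Ici.2 hs) (Set.mem_Ici.2 (by linarith)) (by linarith)
      have h2 : 0 ≤ α (2 * a) := hnn _ (by linarith)
      linarith
    · have h1 : α s ≤ α (2 * a) :=
        hmono.monotoneOn (Set.mem_Ici.2 hs) (Set.mem_Ici.2 (by linarith)) (by linarith)
      have h2 : 0 ≤ α (2 * b) := hnn _ (by linarith)
      linarith
  set c : ℕ → ℝ := fun i =>
    σw ‖wh i - w i‖ + σy ‖h (xh i) (u i) (wh i) - h (x i) (u i) (w i)‖ with hc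
  -- iterated dissipation
  have key : ∀ k, k ≤ t → W (xh k) (x k) ≤ η ^ k * W (xh 0) (x 0) +
      ∑ i ∈ Finset.range k, η ^ (k - 1 - i) * c i := by
    intro k
    induction k with
    | zero => intro _; simp
    | succ k ih =>
      intro hk
      have hkt : k < t := hk
      have hstep : W (xh (k + 1)) (x (k + 1)) ≤ η * W (xh k) (x k) + c k := by
        rw [hdynh k hkt, hdyn k hkt]
        have := hdiss (xh k) (x k) (u k) (wh k) (w k) (hxh k hkt) (hx k hkt) (hu k hkt)
          (hwh k hkt) (hw k hkt) (hyh k hkt) (hy k hkt)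
        simp only [hc]
        linarith
      have ih' := ih (le_of_lt hkt)
      have hsum : η * ∑ i ∈ Finset.range k, η ^ (k - 1 - i) * c i =
          ∑ i ∈ Finset.range k, η ^ (k - i) * c i := by
        rw [Finset.mul_sum]
        refine Finset.sum_congr rfl fun i hi => ?_
        rw [Finset.mem_range] at hi
        rw [← mul_assoc, ← pow_succ']
        congr 2
        omega
      have hmain : W (xh (k + 1)) (x (k + 1)) ≤ η * (η ^ k * W (xh 0) (x 0) +
          ∑ i ∈ Finset.range k, η ^ (k - 1 - i) * c i) + c k := by
        have := mul_le_mul_of_nonneg_left ih' hη0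
        linarith
      rw [mul_add, hsum, ← mul_assoc, ← pow_succ'] at hmain
      have hgoal : ∑ i ∈ Finset.range (k + 1), η ^ (k + 1 - 1 - i) * c i =
          ∑ i ∈ Finset.range k, η ^ (k - i) * c i + c k := by
        rw [Finset.sum_range_succ]
        simp [Nat.succ_sub_one]
      rw [hgoal]
      linarith
  -- reindexing of the sums
  have reindex : ∀ g : ℕ → ℝ, ∑ j ∈ Finset.Icc 1 t, η ^ (j - 1) * g (t - j) =
      ∑ i ∈ Finset.range t, η ^ (t - 1 - i) * g i := by
    intro g
    rw [show Finset.Icc 1 t = Finset.Ico 1 (t + 1) from (Finset.Ico_add_one_right_eq_Icc 1 t).symm]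
    rw [Finset.sum_Ico_eq_sum_range]
    rw [show t + 1 - 1 = t from rfl]
    rw [← Finset.sum_range_reflect (fun i => η ^ (t - 1 - i) * g i) t]
    refine Finset.sum_congr rfl fun i hi => ?_
    rw [Finset.mem_range] at hi
    have e1 : t - 1 - (t - 1 - i) = i := by omega
    have e2 : 1 + i - 1 = i := by omega
    have e3 : t - (1 + i) = t - 1 - i := by omega
    simp only [e1, e2, e3]
  have r1 : ∑ j ∈ Finset.Icc 1 t, η ^ (j - 1) *
        (σw (2 * ‖wh (t - j)‖)
          + σy ‖h (xh (t - j)) (u (t - j)) (wh (t - j))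
              - h (x (t - j)) (u (t - j)) (w (t - j))‖) =
      ∑ i ∈ Finset.range t, η ^ (t - 1 - i) *
        (σw (2 * ‖wh i‖) + σy ‖h (xh i) (u i) (wh i) - h (x i) (u i) (w i)‖) :=
    reindex fun i => σw (2 * ‖wh i‖) + σy ‖h (xh i) (u i) (wh i) - h (x i) (u i) (w i)‖
  have r2 : ∑ j ∈ Finset.Icc 1 t, η ^ (j - 1) * σw (2 * ‖w (t - j)‖) =
      ∑ i ∈ Finset.range t, η ^ (t - 1 - i) * σw (2 * ‖w i‖) :=
    reindex fun i => σw (2 * ‖w i‖)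
  have ht0 : 0 < t := ht
  -- bound on the initial term
  have hW0 : W (xh 0) (x 0) ≤ α2 (2 * ‖xh 0 - xp‖) + α2 (2 * ‖xp - x 0‖) := by
    have h1 : W (xh 0) (x 0) ≤ α2 ‖xh 0 - x 0‖ := hWup _ _ (hxh 0 ht0) (hx 0 ht0)
    have htri : ‖xh 0 - x 0‖ ≤ ‖xh 0 - xp‖ + ‖xp - x 0‖ := by
      have := dist_triangle (xh 0) xp (x 0)
      simpa [dist_eq_norm] using this
    exact le_trans h1 (weak α2 hα2mono hα2nn _ _ _ (norm_nonneg _) (norm_nonneg _)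
      (norm_nonneg _) htri)
  -- termwise bound on the disturbance terms
  have hsum_le : ∑ i ∈ Finset.range t, η ^ (t - 1 - i) * c i ≤
      (∑ i ∈ Finset.range t, η ^ (t - 1 - i) *
        (σw (2 * ‖wh i‖) + σy ‖h (xh i) (u i) (wh i) - h (x i) (u i) (w i)‖)) +
      ∑ i ∈ Finset.range t, η ^ (t - 1 - i) * σw (2 * ‖w i‖) := by
    rw [← Finset.sum_add_distrib]
    refine Finset.sum_le_sum fun i hi => ?_
    have hsw : σw ‖wh i - w i‖ ≤ σw (2 * ‖wh i‖) + σw (2 * ‖w i‖) :=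
      weak σw hσwmono hσwnn _ _ _ (norm_nonneg _) (norm_nonneg _) (norm_nonneg _)
        (norm_sub_le _ _)
    have hη : (0:ℝ) ≤ η ^ (t - 1 - i) := pow_nonneg hη0 _
    have : c i ≤ (σw (2 * ‖wh i‖) + σy ‖h (xh i) (u i) (wh i) - h (x i) (u i) (w i)‖)
        + σw (2 * ‖w i‖) := by
      simp only [hc]; linarith
    nlinarith [mul_le_mul_of_nonneg_left this hη]
  have A := key t le_rfl
  have hPt : (0:ℝ) ≤ η ^ t := pow_nonneg hη0 _
  have h3 := mul_le_mul_of_nonneg_left hW0 hPt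
  rw [mul_add] at h3
  rw [hVFIE, r1, r2]
  linarith
end

section
/- Suppose there exist η ∈ [0,1), a symmetric positive definite n×n matrix P and symmetric positive semidefinite matrices Q (q×q), R (p×p) such that for all (x,u,w) ∈ 𝕏×𝕌×𝕎, with A := A(x,u,w) and B := B(x,u,w), the block matrix [[AᵀPA − ηP − C(u)ᵀRC(u), AᵀPB − C(u)ᵀRD(u)], [BᵀPA − D(u)ᵀRC(u), BᵀPB − Q − D(u)ᵀRD(u)]] is negative semidefinite. Then W(x,x̃) := ‖x − x̃‖_P² is a quadratic δ-IOSS Lyapunov function: for all (x,u,w), (x̃,u,w̃) ∈ 𝕏×𝕌×𝕎, ‖f(x,u,w) − f(x̃,u,w̃)‖_P² ≤ η·‖x − x̃‖_P² + ‖w − w̃‖_Q² + ‖h(x,u,w) − h(x̃,u,w̃)‖_R². (Corollary 2.) -/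
open Matrix

/-- The continuous linear map `(δx, δw) ↦ A δx + B δw` given by a pair of matrices. -/
noncomputable def pairMulCLM {n q k : ℕ}
    (A : Matrix (Fin k) (Fin n) ℝ) (B : Matrix (Fin k) (Fin q) ℝ) :
    ((Fin n → ℝ) × (Fin q → ℝ)) →L[ℝ] (Fin k → ℝ) :=
  (LinearMap.toContinuousLinearMap A.mulVecLin).comp
      (ContinuousLinearMap.fst ℝ (Fin n → ℝ) (Fin q → ℝ))
    + (LinearMap.toContinuousLinearMap B.mulVecLin).comp
      (ContinuousLinearMap.snd ℝ (Fin n → ℝ) (Fin q → ℝ))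

open scoped MatrixOrder in
/-- Square root of a positive semidefinite matrix (via the continuous functional calculus). -/
noncomputable def Matrix.PosSemidef.sqrt {n : ℕ} {P : Matrix (Fin n) (Fin n) ℝ}
    (_hP : P.PosSemidef) : Matrix (Fin n) (Fin n) ℝ :=
  CFC.sqrt P

open scoped MatrixOrder in
lemma Matrix.PosSemidef.sqrt_mul_self {n : ℕ} {P : Matrix (Fin n) (Fin n) ℝ}
    (hP : P.PosSemidef) : hP.sqrt * hP.sqrt = P :=
  CFC.sqrt_mul_sqrt_self P hP.nonneg

open scoped MatrixOrder in
lemma Matrix.PosSemidef.posSemidef_sqrt {n : ℕ} {P : Matrix (Fin n) (Fin n) ℝ}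
    (hP : P.PosSemidef) : hP.sqrt.PosSemidef :=
  (CFC.sqrt_nonneg P).posSemidef

lemma quadNorm_nonneg_s11 {n : ℕ} {P : Matrix (Fin n) (Fin n) ℝ} (hP : P.PosSemidef)
    (v : Fin n → ℝ) : 0 ≤ quadNorm P v := by
  simpa [quadNorm] using hP.dotProduct_mulVec_nonneg v

lemma block_quad_expand {n q : ℕ} (M11 : Matrix (Fin n) (Fin n) ℝ) (M12 : Matrix (Fin n) (Fin q) ℝ)
    (M21 : Matrix (Fin q) (Fin n) ℝ) (M22 : Matrix (Fin q) (Fin q) ℝ) (a : Fin n → ℝ) (b : Fin q → ℝ) :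
    (Sum.elim a b ⬝ᵥ (fromBlocks M11 M12 M21 M22).mulVec (Sum.elim a b)) =
      a ⬝ᵥ M11.mulVec a + a ⬝ᵥ M12.mulVec b + b ⬝ᵥ M21.mulVec a + b ⬝ᵥ M22.mulVec b := by
  simp [Matrix.fromBlocks_mulVec, sumElim_dotProduct_sumElim, dotProduct_add]
  ring

lemma lmi_expand {n q p : ℕ} (A : Matrix (Fin n) (Fin n) ℝ) (B : Matrix (Fin n) (Fin q) ℝ)
    (C : Matrix (Fin p) (Fin n) ℝ) (D : Matrix (Fin p) (Fin q) ℝ)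
    (P : Matrix (Fin n) (Fin n) ℝ) (Q : Matrix (Fin q) (Fin q) ℝ) (R : Matrix (Fin p) (Fin p) ℝ)
    (η : ℝ) (a : Fin n → ℝ) (b : Fin q → ℝ) :
    a ⬝ᵥ (Aᵀ * P * A - η • P - Cᵀ * R * C).mulVec a
    + a ⬝ᵥ (Aᵀ * P * B - Cᵀ * R * D).mulVec b
    + b ⬝ᵥ (Bᵀ * P * A - Dᵀ * R * C).mulVec a
    + b ⬝ᵥ (Bᵀ * P * B - Q - Dᵀ * R * D).mulVec b
    = (A.mulVec a + B.mulVec b) ⬝ᵥ P.mulVec (A.mulVec a + B.mulVec b)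
      - η * (a ⬝ᵥ P.mulVec a) - b ⬝ᵥ Q.mulVec b
      - (C.mulVec a + D.mulVec b) ⬝ᵥ R.mulVec (C.mulVec a + D.mulVec b) := by
  simp [Matrix.sub_mulVec, Matrix.mulVec_add, dotProduct_add, dotProduct_sub,
    Matrix.dotProduct_mulVec, ← Matrix.vecMul_vecMul, Matrix.vecMul_transpose,
    Matrix.add_vecMul, Matrix.smul_mulVec, Matrix.vecMul_smul, dotProduct_smul, smul_eq_mul,
    add_dotProduct, sub_dotProduct, smul_dotProduct]
  ring

lemma quadNorm_eq_norm_sq {n : ℕ} {P : Matrix (Fin n) (Fin n) ℝ} (hP : P.PosDef) (v : Fin n → ℝ) :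
    quadNorm P v = ‖((EuclideanSpace.equiv (Fin n) ℝ).symm (hP.posSemidef.sqrt.mulVec v))‖ ^ 2 := by
  set M := hP.posSemidef.sqrt with hM
  have hMM : M * M = P := hP.posSemidef.sqrt_mul_self
  have hsym : Mᵀ = M := by
    have := hP.posSemidef.posSemidef_sqrt.isHermitian
    simpa [Matrix.IsHermitian, Matrix.conjTranspose_eq_transpose_of_trivial] using this
  have h1 : quadNorm P v = (M *ᵥ v) ⬝ᵥ (M *ᵥ v) := by
    have hvm : v ᵥ* M = M *ᵥ v := by conv_lhs => rw [← hsym, Matrix.vecMul_transpose]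
    rw [quadNorm, ← hMM, ← Matrix.mulVec_mulVec, Matrix.dotProduct_mulVec, hvm]
  rw [h1, EuclideanSpace.norm_eq, Real.sq_sqrt (by positivity)]
  simp [dotProduct, Real.norm_eq_abs, sq_abs, sq]

/-- Key analytic lemma: if the P-quadratic norm of the derivative is bounded by `K`
on `[0,1]`, then the P-quadratic norm of `g 1 - g 0` is at most `K`. -/
lemma quad_integral_bound {n : ℕ} {P : Matrix (Fin n) (Fin n) ℝ} (hP : P.PosDef)
    (g g' : ℝ → (Fin n → ℝ)) (hg : ∀ s, HasDerivAt g (g' s) s)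
    (hcont : Continuous g') (K : ℝ) (hK : 0 ≤ K)
    (hb : ∀ s ∈ Set.Icc (0:ℝ) 1, quadNorm P (g' s) ≤ K) :
    quadNorm P (g 1 - g 0) ≤ K := by
  set M := hP.posSemidef.sqrt with hM
  set L : (Fin n → ℝ) →L[ℝ] EuclideanSpace ℝ (Fin n) :=
    (((EuclideanSpace.equiv (Fin n) ℝ).symm :
        (Fin n → ℝ) ≃L[ℝ] EuclideanSpace ℝ (Fin n)) :
        (Fin n → ℝ) →L[ℝ] EuclideanSpace ℝ (Fin n)).comp
      (LinearMap.toContinuousLinearMap M.mulVecLin) with hL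
  have hLapp : ∀ v, L v = (EuclideanSpace.equiv (Fin n) ℝ).symm (M.mulVec v) := by
    intro v; simp [hL]
  have hΦ : ∀ s : ℝ, HasDerivAt (fun t => L (g t)) (L (g' s)) s := by
    intro s
    exact (L.hasFDerivAt.comp_hasDerivAt s (hg s))
  have hint : IntervalIntegrable (fun t => L (g' t)) MeasureTheory.volume 0 1 :=
    (L.continuous.comp hcont).intervalIntegrable 0 1
  have key : ∫ t in (0:ℝ)..1, L (g' t) = L (g 1) - L (g 0) :=
    intervalIntegral.integral_eq_sub_of_hasDerivAt (fun t _ => hΦ t) hint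
  have hbound : ‖L (g 1) - L (g 0)‖ ≤ Real.sqrt K * |(1:ℝ) - 0| := by
    rw [← key]
    apply intervalIntegral.norm_integral_le_of_norm_le_const
    intro t ht
    have ht' : t ∈ Set.Icc (0:ℝ) 1 := by
      rw [Set.uIoc_of_le zero_le_one] at ht
      exact ⟨le_of_lt ht.1, ht.2⟩
    have h2 : ‖L (g' t)‖ ^ 2 ≤ K := by
      rw [hLapp]
      rw [← quadNorm_eq_norm_sq hP]
      exact hb t ht'
    nlinarith [norm_nonneg (L (g' t)), Real.sqrt_nonneg K, Real.sq_sqrt hK]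
  have hdiff : L (g 1) - L (g 0) = L (g 1 - g 0) := by rw [map_sub]
  rw [quadNorm_eq_norm_sq hP, ← hLapp, ← hdiff]
  calc ‖L (g 1) - L (g 0)‖ ^ 2 ≤ (Real.sqrt K * |(1:ℝ) - 0|) ^ 2 := by
        have := hbound
        nlinarith [norm_nonneg (L (g 1) - L (g 0)), Real.sqrt_nonneg K]
    _ = K := by rw [show |(1:ℝ) - 0| = 1 by norm_num, mul_one, Real.sq_sqrt hK]

/-- Corollary 2: a quadratic δ-IOSS Lyapunov function from an LMI on the
Jacobians of `f`, for an output map that is affine in the state and the disturbance. -/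
theorem quadratic_dIOSS_Lyapunov_function
    {n m q p : ℕ}
    (f : (Fin n → ℝ) → (Fin m → ℝ) → (Fin q → ℝ) → (Fin n → ℝ))
    (h : (Fin n → ℝ) → (Fin m → ℝ) → (Fin q → ℝ) → (Fin p → ℝ))
    (X : Set (Fin n → ℝ)) (U : Set (Fin m → ℝ)) (Wset : Set (Fin q → ℝ))
    (hXconv : Convex ℝ X) (hWconv : Convex ℝ Wset)
    -- for each fixed input, (x, w) ↦ f(x, u, w) is continuously differentiable
    (hfC1 : ∀ u, ContDiff ℝ 1 (fun pr : (Fin n → ℝ) × (Fin q → ℝ) => f pr.1 u pr.2))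
    -- Jacobians of f
    (A : (Fin n → ℝ) → (Fin m → ℝ) → (Fin q → ℝ) → Matrix (Fin n) (Fin n) ℝ)
    (B : (Fin n → ℝ) → (Fin m → ℝ) → (Fin q → ℝ) → Matrix (Fin n) (Fin q) ℝ)
    (hJac : ∀ x u w, HasFDerivAt (fun pr : (Fin n → ℝ) × (Fin q → ℝ) => f pr.1 u pr.2)
      (pairMulCLM (A x u w) (B x u w)) (x, w))
    -- h is affine in (x, w)
    (C : (Fin m → ℝ) → Matrix (Fin p) (Fin n) ℝ)
    (D : (Fin m → ℝ) → Matrix (Fin p) (Fin q) ℝ)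
    (e : (Fin m → ℝ) → (Fin p → ℝ))
    (haff : ∀ x u w, h x u w = (C u).mulVec x + (D u).mulVec w + e u)
    -- LMI
    (η : ℝ) (hη0 : 0 ≤ η) (hη1 : η < 1)
    (P : Matrix (Fin n) (Fin n) ℝ) (hP : P.PosDef)
    (Q : Matrix (Fin q) (Fin q) ℝ) (hQ : Q.PosSemidef)
    (R : Matrix (Fin p) (Fin p) ℝ) (hR : R.PosSemidef)
    (hLMI : ∀ x u w, x ∈ X → u ∈ U → w ∈ Wset →
      ∀ v : (Fin n ⊕ Fin q) → ℝ,
        v ⬝ᵥ (Matrix.fromBlocks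
          ((A x u w)ᵀ * P * A x u w - η • P - (C u)ᵀ * R * C u)
          ((A x u w)ᵀ * P * B x u w - (C u)ᵀ * R * D u)
          ((B x u w)ᵀ * P * A x u w - (D u)ᵀ * R * C u)
          ((B x u w)ᵀ * P * B x u w - Q - (D u)ᵀ * R * D u)).mulVec v ≤ 0) :
    ∀ x xt u w wt, x ∈ X → xt ∈ X → u ∈ U → w ∈ Wset → wt ∈ Wset →
      quadNorm P (f x u w - f xt u wt) ≤
        η * quadNorm P (x - xt) + quadNorm Q (w - wt)
          + quadNorm R (h x u w - h xt u wt) := by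
  intro x xt u w wt hx hxt hu hw hwt
  set δx := x - xt with hδx
  set δw := w - wt with hδw
  -- the output difference
  have hdy : h x u w - h xt u wt = (C u).mulVec δx + (D u).mulVec δw := by
    simp only [haff, hδx, hδw, Matrix.mulVec_sub]
    abel
  set K : ℝ := η * quadNorm P δx + quadNorm Q δw
      + quadNorm R ((C u).mulVec δx + (D u).mulVec δw) with hKdef
  -- the curve
  set γ : ℝ → (Fin n → ℝ) := fun s => xt + s • δx with hγ
  set ω : ℝ → (Fin q → ℝ) := fun s => wt + s • δw with hω
  have hγmem : ∀ s ∈ Set.Icc (0:ℝ) 1, γ s ∈ X := by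
    intro s hs
    have := hXconv hxt hx (by linarith [hs.2] : (0:ℝ) ≤ 1 - s) hs.1 (by ring)
    convert this using 1
    funext i
    simp only [hγ, hδx, Pi.add_apply, Pi.smul_apply, Pi.sub_apply, smul_eq_mul]
    ring
  have hωmem : ∀ s ∈ Set.Icc (0:ℝ) 1, ω s ∈ Wset := by
    intro s hs
    have := hWconv hwt hw (by linarith [hs.2] : (0:ℝ) ≤ 1 - s) hs.1 (by ring)
    convert this using 1
    funext i
    simp only [hω, hδw, Pi.add_apply, Pi.smul_apply, Pi.sub_apply, smul_eq_mul]
    ring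
  set g : ℝ → (Fin n → ℝ) := fun s => f (γ s) u (ω s) with hg
  set g' : ℝ → (Fin n → ℝ) :=
    fun s => (A (γ s) u (ω s)).mulVec δx + (B (γ s) u (ω s)).mulVec δw with hg'
  -- the curve in the product space
  have hcurve : ∀ s : ℝ, HasDerivAt (fun t : ℝ => (γ t, ω t)) (δx, δw) s := by
    intro s
    apply HasDerivAt.prodMk
    · simpa [hγ] using ((hasDerivAt_id s).smul_const δx).const_add xt
    · simpa [hω] using ((hasDerivAt_id s).smul_const δw).const_add wt
  have hgderiv : ∀ s : ℝ, HasDerivAt g (g' s) s := by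
    intro s
    have := (hJac (γ s) u (ω s)).comp_hasDerivAt s (hcurve s)
    refine this.congr_deriv ?_
    simp [hg', pairMulCLM]
  -- continuity of g'
  have hcont : Continuous g' := by
    have hγc : Continuous γ := by fun_prop
    have hωc : Continuous ω := by fun_prop
    have hcc : Continuous (fun s : ℝ => (γ s, ω s)) := hγc.prodMk hωc
    have hfd : Continuous (fderiv ℝ (fun pr : (Fin n → ℝ) × (Fin q → ℝ) => f pr.1 u pr.2)) :=
      (hfC1 u).continuous_fderiv one_ne_zero
    have heq : ∀ s : ℝ, g' s =
        (fderiv ℝ (fun pr : (Fin n → ℝ) × (Fin q → ℝ) => f pr.1 u pr.2) (γ s, ω s)) (δx, δw) := by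
      intro s
      rw [(hJac (γ s) u (ω s)).fderiv]
      simp [hg', pairMulCLM]
    have : Continuous (fun s : ℝ =>
        (fderiv ℝ (fun pr : (Fin n → ℝ) × (Fin q → ℝ) => f pr.1 u pr.2) (γ s, ω s)) (δx, δw)) :=
      (hfd.comp hcc).clm_apply continuous_const
    exact this.congr (fun s => (heq s).symm)
  -- nonnegativity of K
  have hK0 : 0 ≤ K := by
    have h1 := quadNorm_nonneg_s11 hP.posSemidef δx
    have h2 := quadNorm_nonneg_s11 hQ δw
    have h3 := quadNorm_nonneg_s11 hR ((C u).mulVec δx + (D u).mulVec δw)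
    nlinarith
  -- pointwise bound from the LMI
  have hb : ∀ s ∈ Set.Icc (0:ℝ) 1, quadNorm P (g' s) ≤ K := by
    intro s hs
    have hlmi := hLMI (γ s) u (ω s) (hγmem s hs) hu (hωmem s hs) (Sum.elim δx δw)
    rw [block_quad_expand] at hlmi
    rw [lmi_expand] at hlmi
    simp only [hg', quadNorm, hKdef]
    linarith
  -- integrate
  have hmain := quad_integral_bound hP g g' hgderiv hcont K hK0 hb
  have hg1 : g 1 = f x u w := by
    simp only [hg, hγ, hω, one_smul, hδx, hδw]
    norm_num
  have hg0 : g 0 = f xt u wt := by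
    simp only [hg, hγ, hω, zero_smul, add_zero]
  rw [hg1, hg0] at hmain
  rw [hdy]
  exact hmain
end

section
/- Let P : ℝ^n → ℝ^{n×n} be continuous with symmetric values and let P1 be a symmetric positive semidefinite n×n matrix with P1 ⪯ P(z) for all z ∈ ℝ^n. Then every continuously differentiable curve c : [0,1] → ℝ^n satisfies the Riemannian energy lower bound ∫₀¹ c′(s)ᵀ·P(c(s))·c′(s) ds ≥ ‖c(1) − c(0)‖_{P1}². (Lower quadratic bound on the Riemannian energy used in Part II of the proof of Theorem 2.) -/
open Matrix MeasureTheory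

lemma symm_dot {ι : Type*} [Fintype ι] {S : Matrix ι ι ℝ} (hS : Sᵀ = S) (a b : ι → ℝ) :
    a ⬝ᵥ S.mulVec b = b ⬝ᵥ S.mulVec a := by
  rw [Matrix.dotProduct_mulVec, ← Matrix.mulVec_transpose, hS, dotProduct_comm]

/-- lower quadratic bound on the Riemannian energy of a C¹ curve
(Part II of the proof of Theorem 2). -/
theorem riemannian_energy_lower_bound
    {n : ℕ}
    (P : (Fin n → ℝ) → Matrix (Fin n) (Fin n) ℝ)
    (hPcont : ∀ i j, Continuous fun z => P z i j)
    (hPsymm : ∀ z, (P z).IsSymm)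
    (P1 : Matrix (Fin n) (Fin n) ℝ) (hP1 : P1.PosSemidef)
    (hP1le : ∀ z, (P z - P1).PosSemidef)
    (c : ℝ → (Fin n → ℝ)) (hc : ContDiff ℝ 1 c) :
    quadNorm P1 (c 1 - c 0) ≤ ∫ s in (0:ℝ)..1, quadNorm (P (c s)) (deriv c s) := by
  set v : ℝ → (Fin n → ℝ) := deriv c with hv
  have hvcont : Continuous v := hc.continuous_deriv le_rfl
  have hcd : Differentiable ℝ c := hc.differentiable (by norm_num)
  set w : Fin n → ℝ := c 1 - c 0 with hw
  have hint : IntervalIntegrable v volume 0 1 := hvcont.intervalIntegrable 0 1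
  have hsub : (∫ s in (0:ℝ)..1, v s) = w := by
    rw [hw]
    exact intervalIntegral.integral_deriv_eq_sub (fun x _ => hcd x) hint
  have hP1symm : P1ᵀ = P1 := hP1.1
  -- linear functional u ↦ w ⬝ᵥ P1 u
  let L0 : (Fin n → ℝ) →ₗ[ℝ] ℝ :=
    { toFun := fun u => w ⬝ᵥ P1.mulVec u
      map_add' := fun a b => by simp [Matrix.mulVec_add, dotProduct_add]
      map_smul' := fun r a => by simp [Matrix.mulVec_smul, dotProduct_smul] }
  let L : (Fin n → ℝ) →L[ℝ] ℝ := L0.toContinuousLinearMap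
  have hL : ∀ u, L u = w ⬝ᵥ P1.mulVec u := fun u => rfl
  have h1 : quadNorm P1 w = ∫ s in (0:ℝ)..1, w ⬝ᵥ P1.mulVec (v s) := by
    have h2 : L (∫ s in (0:ℝ)..1, v s) = ∫ s in (0:ℝ)..1, L (v s) :=
      (L.intervalIntegral_comp_comm hint (a := 0) (b := 1)).symm
    rw [hsub] at h2
    simpa only [hL, quadNorm] using h2
  -- continuity of integrands
  have hPc : Continuous fun s => P (c s) := by
    apply continuous_matrix
    intro i j
    exact (hPcont i j).comp hc.continuous
  have hQcont : Continuous fun s => quadNorm (P (c s)) (v s) :=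
    hvcont.dotProduct (hPc.matrix_mulVec hvcont)
  have hWcont : Continuous fun s => w ⬝ᵥ P1.mulVec (v s) :=
    continuous_const.dotProduct (continuous_const.matrix_mulVec hvcont)
  -- pointwise inequality
  have key : ∀ s : ℝ, w ⬝ᵥ P1.mulVec (v s) ≤
      (quadNorm P1 w + quadNorm (P (c s)) (v s)) / 2 := by
    intro s
    have h0 : 0 ≤ (w - v s) ⬝ᵥ P1.mulVec (w - v s) := hP1.dotProduct_mulVec_nonneg _
    have hexp : (w - v s) ⬝ᵥ P1.mulVec (w - v s) =
        quadNorm P1 w - 2 * (w ⬝ᵥ P1.mulVec (v s)) + quadNorm P1 (v s) := by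
      simp only [Matrix.mulVec_sub, dotProduct_sub, sub_dotProduct]
      rw [symm_dot hP1symm (v s) w]
      unfold quadNorm; ring
    have hmono : quadNorm P1 (v s) ≤ quadNorm (P (c s)) (v s) := by
      have h2 : 0 ≤ v s ⬝ᵥ (P (c s) - P1).mulVec (v s) := (hP1le (c s)).dotProduct_mulVec_nonneg _
      rw [Matrix.sub_mulVec, dotProduct_sub] at h2
      unfold quadNorm; linarith
    rw [hexp] at h0
    linarith
  have hmono := intervalIntegral.integral_mono_on (μ := volume) (by norm_num : (0:ℝ) ≤ 1)
    (hWcont.intervalIntegrable 0 1)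
    (((continuous_const.add hQcont).div_const 2).intervalIntegrable 0 1)
    (fun s _ => key s)
  rw [← h1] at hmono
  have hconst : (∫ s in (0:ℝ)..1,
      (quadNorm P1 w + quadNorm (P (c s)) (v s)) / 2) =
      quadNorm P1 w / 2 + (∫ s in (0:ℝ)..1, quadNorm (P (c s)) (v s)) / 2 := by
    rw [intervalIntegral.integral_div, intervalIntegral.integral_add
      (continuous_const.intervalIntegrable 0 1) (hQcont.intervalIntegrable 0 1)]
    simp [add_div]
  have hmono : quadNorm P1 w ≤ ∫ s in (0:ℝ)..1, (quadNorm P1 w + quadNorm (P (c s)) (v s)) / 2 := hmono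
  rw [hconst] at hmono
  linarith
end
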